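/- arXiv:2602.21870 — 9 statements merged into one kernel-verified Lean document; each statement's English description precedes it below -/
import Mathlib

section
/- For every element ξ of 𝔤 ≅ sp₄(ℂ), the complex dimension of the centralizer 𝓩_ξ = {z ∈ 𝔤 : zξ = ξz} belongs to {2, 4, 6, 10}. (Thus 𝔤 is the union of exactly four strata 𝔤⁸, 𝔤⁶, 𝔤⁴, 𝔤⁰, where 𝔤^d is the set of ξ whose centralizer has dimension 10 − d.) -/
open Matrix

noncomputable section

/-- The Lie algebra 𝔤 ≅ sp₄(ℂ), realized as the space of 4×4 complex matrices
with rows (A,B,C,D), (E,F,G,C), (H,I,−F,−B), (J,H,−E,−A). -/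
def sp4 : Submodule ℂ (Matrix (Fin 4) (Fin 4) ℂ) where
  carrier := {M | M 1 3 = M 0 2 ∧ M 2 2 = -M 1 1 ∧ M 2 3 = -M 0 1 ∧
    M 3 1 = M 2 0 ∧ M 3 2 = -M 1 0 ∧ M 3 3 = -M 0 0}
  add_mem' := by
    rintro a b ⟨h1, h2, h3, h4, h5, h6⟩ ⟨k1, k2, k3, k4, k5, k6⟩
    simp only [Set.mem_setOf_eq, Matrix.add_apply, h1, h2, h3, h4, h5, h6,
      k1, k2, k3, k4, k5, k6]
    refine ⟨?_, ?_, ?_, ?_, ?_, ?_⟩ <;> first | trivial | ring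
  zero_mem' := by
    simp [Set.mem_setOf_eq]
  smul_mem' := by
    rintro c a ⟨h1, h2, h3, h4, h5, h6⟩
    simp only [Set.mem_setOf_eq, Matrix.smul_apply, h1, h2, h3, h4, h5, h6, smul_eq_mul]
    refine ⟨?_, ?_, ?_, ?_, ?_, ?_⟩ <;> first | trivial | ring

/-- Matrices commuting with a given matrix `q`. -/
def commWith (q : Matrix (Fin 4) (Fin 4) ℂ) : Submodule ℂ (Matrix (Fin 4) (Fin 4) ℂ) where
  carrier := {z | z * q = q * z}
  add_mem' := by
    intro a b ha hb
    simp only [Set.mem_setOf_eq] at *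
    rw [add_mul, mul_add, ha, hb]
  zero_mem' := by simp
  smul_mem' := by
    intro c a ha
    simp only [Set.mem_setOf_eq] at *
    rw [smul_mul_assoc, mul_smul_comm, ha]

/-- The centralizer 𝓩_q = {z ∈ 𝔤 : zq = qz}, a ℂ-subspace of 𝔤. -/
def cent (q : Matrix (Fin 4) (Fin 4) ℂ) : Submodule ℂ (Matrix (Fin 4) (Fin 4) ℂ) :=
  sp4 ⊓ commWith q

/-- The element q(b,c,d,f,g,i) of the Slodowy slice. -/
def qmat (b c d f g i : ℂ) : Matrix (Fin 4) (Fin 4) ℂ :=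
  !![0, b, c, d; 0, f, g, c; 0, i, -f, -b; 1, 0, 0, 0]

namespace SP4Aux


@[simp] theorem cv10_0 {α : Type*} (x0 x1 x2 x3 x4 x5 x6 x7 x8 x9 : α) : ![x0, x1, x2, x3, x4, x5, x6, x7, x8, x9] (0 : Fin 10) = x0 := rfl

@[simp] theorem cv10m_0 {α : Type*} (x0 x1 x2 x3 x4 x5 x6 x7 x8 x9 : α) (h : (0 : ℕ) < 10) : ![x0, x1, x2, x3, x4, x5, x6, x7, x8, x9] (⟨0, h⟩ : Fin 10) = x0 := rfl

@[simp] theorem cv10_1 {α : Type*} (x0 x1 x2 x3 x4 x5 x6 x7 x8 x9 : α) : ![x0, x1, x2, x3, x4, x5, x6, x7, x8, x9] (1 : Fin 10) = x1 := rfl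

@[simp] theorem cv10m_1 {α : Type*} (x0 x1 x2 x3 x4 x5 x6 x7 x8 x9 : α) (h : (1 : ℕ) < 10) : ![x0, x1, x2, x3, x4, x5, x6, x7, x8, x9] (⟨1, h⟩ : Fin 10) = x1 := rfl

@[simp] theorem cv10_2 {α : Type*} (x0 x1 x2 x3 x4 x5 x6 x7 x8 x9 : α) : ![x0, x1, x2, x3, x4, x5, x6, x7, x8, x9] (2 : Fin 10) = x2 := rfl

@[simp] theorem cv10m_2 {α : Type*} (x0 x1 x2 x3 x4 x5 x6 x7 x8 x9 : α) (h : (2 : ℕ) < 10) : ![x0, x1, x2, x3, x4, x5, x6, x7, x8, x9] (⟨2, h⟩ : Fin 10) = x2 := rfl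

@[simp] theorem cv10_3 {α : Type*} (x0 x1 x2 x3 x4 x5 x6 x7 x8 x9 : α) : ![x0, x1, x2, x3, x4, x5, x6, x7, x8, x9] (3 : Fin 10) = x3 := rfl

@[simp] theorem cv10m_3 {α : Type*} (x0 x1 x2 x3 x4 x5 x6 x7 x8 x9 : α) (h : (3 : ℕ) < 10) : ![x0, x1, x2, x3, x4, x5, x6, x7, x8, x9] (⟨3, h⟩ : Fin 10) = x3 := rfl

@[simp] theorem cv10_4 {α : Type*} (x0 x1 x2 x3 x4 x5 x6 x7 x8 x9 : α) : ![x0, x1, x2, x3, x4, x5, x6, x7, x8, x9] (4 : Fin 10) = x4 := rfl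

@[simp] theorem cv10m_4 {α : Type*} (x0 x1 x2 x3 x4 x5 x6 x7 x8 x9 : α) (h : (4 : ℕ) < 10) : ![x0, x1, x2, x3, x4, x5, x6, x7, x8, x9] (⟨4, h⟩ : Fin 10) = x4 := rfl

@[simp] theorem cv10_5 {α : Type*} (x0 x1 x2 x3 x4 x5 x6 x7 x8 x9 : α) : ![x0, x1, x2, x3, x4, x5, x6, x7, x8, x9] (5 : Fin 10) = x5 := rfl

@[simp] theorem cv10m_5 {α : Type*} (x0 x1 x2 x3 x4 x5 x6 x7 x8 x9 : α) (h : (5 : ℕ) < 10) : ![x0, x1, x2, x3, x4, x5, x6, x7, x8, x9] (⟨5, h⟩ : Fin 10) = x5 := rfl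

@[simp] theorem cv10_6 {α : Type*} (x0 x1 x2 x3 x4 x5 x6 x7 x8 x9 : α) : ![x0, x1, x2, x3, x4, x5, x6, x7, x8, x9] (6 : Fin 10) = x6 := rfl

@[simp] theorem cv10m_6 {α : Type*} (x0 x1 x2 x3 x4 x5 x6 x7 x8 x9 : α) (h : (6 : ℕ) < 10) : ![x0, x1, x2, x3, x4, x5, x6, x7, x8, x9] (⟨6, h⟩ : Fin 10) = x6 := rfl

@[simp] theorem cv10_7 {α : Type*} (x0 x1 x2 x3 x4 x5 x6 x7 x8 x9 : α) : ![x0, x1, x2, x3, x4, x5, x6, x7, x8, x9] (7 : Fin 10) = x7 := rfl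

@[simp] theorem cv10m_7 {α : Type*} (x0 x1 x2 x3 x4 x5 x6 x7 x8 x9 : α) (h : (7 : ℕ) < 10) : ![x0, x1, x2, x3, x4, x5, x6, x7, x8, x9] (⟨7, h⟩ : Fin 10) = x7 := rfl

@[simp] theorem cv10_8 {α : Type*} (x0 x1 x2 x3 x4 x5 x6 x7 x8 x9 : α) : ![x0, x1, x2, x3, x4, x5, x6, x7, x8, x9] (8 : Fin 10) = x8 := rfl

@[simp] theorem cv10m_8 {α : Type*} (x0 x1 x2 x3 x4 x5 x6 x7 x8 x9 : α) (h : (8 : ℕ) < 10) : ![x0, x1, x2, x3, x4, x5, x6, x7, x8, x9] (⟨8, h⟩ : Fin 10) = x8 := rfl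

@[simp] theorem cv10_9 {α : Type*} (x0 x1 x2 x3 x4 x5 x6 x7 x8 x9 : α) : ![x0, x1, x2, x3, x4, x5, x6, x7, x8, x9] (9 : Fin 10) = x9 := rfl

@[simp] theorem cv10m_9 {α : Type*} (x0 x1 x2 x3 x4 x5 x6 x7 x8 x9 : α) (h : (9 : ℕ) < 10) : ![x0, x1, x2, x3, x4, x5, x6, x7, x8, x9] (⟨9, h⟩ : Fin 10) = x9 := rfl

@[simp] theorem cv4_0 {α : Type*} (x0 x1 x2 x3 : α) : ![x0, x1, x2, x3] (0 : Fin 4) = x0 := rfl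

@[simp] theorem cv4m_0 {α : Type*} (x0 x1 x2 x3 : α) (h : (0 : ℕ) < 4) : ![x0, x1, x2, x3] (⟨0, h⟩ : Fin 4) = x0 := rfl

@[simp] theorem cv4_1 {α : Type*} (x0 x1 x2 x3 : α) : ![x0, x1, x2, x3] (1 : Fin 4) = x1 := rfl

@[simp] theorem cv4m_1 {α : Type*} (x0 x1 x2 x3 : α) (h : (1 : ℕ) < 4) : ![x0, x1, x2, x3] (⟨1, h⟩ : Fin 4) = x1 := rfl

@[simp] theorem cv4_2 {α : Type*} (x0 x1 x2 x3 : α) : ![x0, x1, x2, x3] (2 : Fin 4) = x2 := rfl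

@[simp] theorem cv4m_2 {α : Type*} (x0 x1 x2 x3 : α) (h : (2 : ℕ) < 4) : ![x0, x1, x2, x3] (⟨2, h⟩ : Fin 4) = x2 := rfl

@[simp] theorem cv4_3 {α : Type*} (x0 x1 x2 x3 : α) : ![x0, x1, x2, x3] (3 : Fin 4) = x3 := rfl

@[simp] theorem cv4m_3 {α : Type*} (x0 x1 x2 x3 : α) (h : (3 : ℕ) < 4) : ![x0, x1, x2, x3] (⟨3, h⟩ : Fin 4) = x3 := rfl


def Phim (a0 a1 a2 a3 a4 a5 a6 a7 a8 a9 : ℂ) : Matrix (Fin 4) (Fin 4) ℂ :=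
  !![a0,a1,a2,a3; a4,a5,a6,a2; a7,a8,-a5,-a1; a9,a7,-a4,-a0]

def Gm (a0 a1 a2 a3 a4 a5 a6 a7 a8 a9 : ℂ) : Matrix (Fin 10) (Fin 10) ℂ :=
  !![0, 2*a4, 2*a7, 2*a9, -2*a1, 0, 0, -2*a2, 0, -2*a3;
     -2*a4, 0, 2*a9, 0, -2*a5 + 2*a0, 2*a4, 2*a7, -2*a6, 0, -2*a2;
     -2*a7, -2*a9, 0, 0, -2*a8, -2*a7, 0, 2*a5 + 2*a0, 2*a4, 2*a1;
     -2*a9, 0, 0, 0, -2*a7, 0, 0, 2*a4, 0, 2*a0;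
     2*a1, 2*a5 - 2*a0, 2*a8, 2*a7, 0, -2*a1, 0, -2*a3, -2*a2, 0;
     0, -2*a4, 2*a7, 0, 2*a1, 0, 2*a8, -2*a2, -2*a6, 0;
     0, -2*a7, 0, 0, 0, -2*a8, 0, 2*a1, 2*a5, 0;
     2*a2, 2*a6, -2*a5 - 2*a0, -2*a4, 2*a3, 2*a2, -2*a1, 0, 0, 0;
     0, 0, -2*a4, 0, 2*a2, 2*a6, -2*a5, 0, 0, 0;
     2*a3, 2*a2, -2*a1, -2*a0, 0, 0, 0, 0, 0, 0]



theorem gm_alt (a0 a1 a2 a3 a4 a5 a6 a7 a8 a9 : ℂ) (v : Fin 10 → ℂ) : v ⬝ᵥ (Gm a0 a1 a2 a3 a4 a5 a6 a7 a8 a9) *ᵥ v = 0 := by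
  simp [Gm, Matrix.mulVec, dotProduct, Fin.sum_univ_succ, Matrix.of_apply]
  ring

def bform (A : Matrix (Fin 10) (Fin 10) ℂ) : (Fin 10 → ℂ) →ₗ[ℂ] (Fin 10 → ℂ) →ₗ[ℂ] ℂ :=
  LinearMap.mk₂ ℂ (fun x y => x ⬝ᵥ A *ᵥ y)
    (fun x x' y => by simp [add_dotProduct])
    (fun c x y => by simp [smul_dotProduct])
    (fun x y y' => by simp [Matrix.mulVec_add, dotProduct_add])
    (fun c x y => by simp [Matrix.mulVec_smul, dotProduct_smul])

theorem bform_apply (A : Matrix (Fin 10) (Fin 10) ℂ) (x y : Fin 10 → ℂ) :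
    bform A x y = x ⬝ᵥ A *ᵥ y := rfl

theorem bform_pol (A : Matrix (Fin 10) (Fin 10) ℂ) (halt : ∀ v, bform A v v = 0)
    (x y : Fin 10 → ℂ) : bform A x y = - bform A y x := by
  have h := halt (x + y)
  have hx := halt x
  have hy := halt y
  simp only [_root_.map_add, LinearMap.add_apply] at h
  linear_combination h - hx - hy



section Parity

variable {V : Type*} [AddCommGroup V] [Module ℂ V] [FiniteDimensional ℂ V]
variable (B : V →ₗ[ℂ] V →ₗ[ℂ] ℂ)

def rad (W : Submodule ℂ V) : Submodule ℂ V :=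
  W ⊓ ⨅ y ∈ (W : Set V), LinearMap.ker (B.flip y)

theorem mem_rad {W : Submodule ℂ V} {x : V} :
    x ∈ rad B W ↔ x ∈ W ∧ ∀ y ∈ W, B x y = 0 := by
  simp [rad, Submodule.mem_inf, Submodule.mem_iInf, LinearMap.mem_ker]

theorem rad_le (W : Submodule ℂ V) : rad B W ≤ W := inf_le_left

theorem parity_aux (hB : ∀ v, B v v = 0) :
    ∀ (n : ℕ) (W : Submodule ℂ V), Module.finrank ℂ W ≤ n →
      Even (Module.finrank ℂ W - Module.finrank ℂ (rad B W)) := by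
  have hskew : ∀ x y, B x y = - B y x := by
    intro x y
    have h := hB (x + y)
    have hx := hB x
    have hy := hB y
    simp only [_root_.map_add, LinearMap.add_apply] at h
    linear_combination h - hx - hy
  intro n
  induction n with
  | zero =>
    intro W hW
    have h2 : Module.finrank ℂ W - Module.finrank ℂ (rad B W) = 0 := by omega
    rw [h2]
    exact Even.zero
  | succ n ih =>
    intro W hW
    by_cases h0 : ∀ x ∈ W, ∀ y ∈ W, B x y = 0
    · have hr : rad B W = W :=
        le_antisymm (rad_le B W) (fun x hx => (mem_rad B).2 ⟨hx, h0 x hx⟩)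
      rw [hr, Nat.sub_self]
      exact Even.zero
    · push_neg at h0
      obtain ⟨u, hu, y0, hy0, hBuy⟩ := h0
      set v : V := (B u y0)⁻¹ • y0 with hv
      have hvW : v ∈ W := W.smul_mem _ hy0
      have hBuv : B u v = 1 := by
        rw [hv, LinearMap.map_smul, smul_eq_mul, inv_mul_cancel₀ hBuy]
      have hBvu : B v u = -1 := by
        rw [hskew v u, hBuv]
      have hBuu : B u u = 0 := hB u
      have hBvv : B v v = 0 := hB v
      set W' : Submodule ℂ V := W ⊓ LinearMap.ker (B u) ⊓ LinearMap.ker (B v) with hW'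
      have hW'le : W' ≤ W := le_trans inf_le_left inf_le_left
      have hmemW' : ∀ z, z ∈ W' ↔ z ∈ W ∧ B u z = 0 ∧ B v z = 0 := by
        intro z
        constructor
        · rintro ⟨⟨h1, h2⟩, h3⟩
          exact ⟨h1, h2, h3⟩
        · rintro ⟨h1, h2, h3⟩
          exact ⟨⟨h1, h2⟩, h3⟩
      have hdecomp : ∀ z ∈ W, z - (B u z) • v + (B v z) • u ∈ W' := by
        intro z hz
        rw [hmemW']
        refine ⟨W.add_mem (W.sub_mem hz (W.smul_mem _ hvW)) (W.smul_mem _ hu), ?_, ?_⟩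
        · simp only [_root_.map_add, _root_.map_sub, _root_.map_smul, smul_eq_mul, hBuv, hBuu]
          ring
        · simp only [_root_.map_add, _root_.map_sub, _root_.map_smul, smul_eq_mul, hBvv, hBvu]
          ring
      have hsup : W' ⊔ Submodule.span ℂ {u, v} = W := by
        apply le_antisymm
        · refine sup_le hW'le (Submodule.span_le.2 ?_)
          rintro z hz
          rcases hz with rfl | hz
          · exact hu
          · rcases hz with rfl
            exact hvW
        · intro z hz
          have h1 := hdecomp z hz
          have h2 : z = (z - (B u z) • v + (B v z) • u) + ((B u z) • v - (B v z) • u) := by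
            abel
          rw [h2]
          refine Submodule.add_mem _ (Submodule.mem_sup_left h1) (Submodule.mem_sup_right ?_)
          refine Submodule.sub_mem _ (Submodule.smul_mem _ _ ?_) (Submodule.smul_mem _ _ ?_)
          · exact Submodule.subset_span (by simp)
          · exact Submodule.subset_span (by simp)
      have hinf : W' ⊓ Submodule.span ℂ {u, v} = ⊥ := by
        rw [Submodule.eq_bot_iff]
        intro z hz
        rw [Submodule.mem_inf] at hz
        obtain ⟨hz1, hz2⟩ := hz
        obtain ⟨s, t, rfl⟩ := Submodule.mem_span_pair.1 hz2
        rw [hmemW'] at hz1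
        obtain ⟨-, h1, h2⟩ := hz1
        simp only [_root_.map_add, _root_.map_smul, smul_eq_mul, hBuu, hBuv, hBvu, hBvv] at h1 h2
        have hs : s = 0 := by linear_combination -h2
        have ht : t = 0 := by linear_combination h1
        rw [hs, ht]
        simp
      have huvli : LinearIndependent ℂ ![u, v] := by
        rw [LinearIndependent.pair_iff]
        intro s t hst
        have h1 : B u (s • u + t • v) = 0 := by rw [hst, _root_.map_zero]
        have h2 : B v (s • u + t • v) = 0 := by rw [hst, _root_.map_zero]
        simp only [_root_.map_add, _root_.map_smul, smul_eq_mul, hBuu, hBuv, hBvu, hBvv] at h1 h2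
        constructor
        · linear_combination -h2
        · linear_combination h1
      have hspan2 : Module.finrank ℂ (Submodule.span ℂ ({u, v} : Set V)) = 2 := by
        have h := finrank_span_eq_card huvli
        have hr : Set.range ![u, v] = ({u, v} : Set V) := by
          ext z
          simp [Fin.exists_fin_two, or_comm]
        rw [hr] at h
        simpa using h
      have hdim : Module.finrank ℂ W = Module.finrank ℂ W' + 2 := by
        have hh := Submodule.finrank_sup_add_finrank_inf_eq W' (Submodule.span ℂ {u, v})
        rw [hsup, hinf, hspan2] at hh
        simp only [finrank_bot] at hh
        omega
      have hradeq : rad B W = rad B W' := by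
        ext x
        rw [mem_rad, mem_rad]
        constructor
        · rintro ⟨hxW, hx⟩
          refine ⟨(hmemW' x).2 ⟨hxW, ?_, ?_⟩, fun y hy => hx y (hW'le hy)⟩
          · rw [hskew, hx u hu, neg_zero]
          · rw [hskew, hx v hvW, neg_zero]
        · rintro ⟨hxW', hx⟩
          obtain ⟨hxW, hxu, hxv⟩ := (hmemW' x).1 hxW'
          refine ⟨hxW, fun z hz => ?_⟩
          have h1 := hx _ (hdecomp z hz)
          have h2 : B x v = 0 := by rw [hskew, hxv, neg_zero]
          have h3 : B x u = 0 := by rw [hskew, hxu, neg_zero]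
          simp only [_root_.map_add, _root_.map_sub, _root_.map_smul, smul_eq_mul, h2, h3] at h1
          linear_combination h1
      have hrle : Module.finrank ℂ W' ≤ n := by omega
      have hEv := ih W' hrle
      have hle2 : Module.finrank ℂ (rad B W') ≤ Module.finrank ℂ W' :=
        Submodule.finrank_mono (rad_le B W')
      rw [hdim, hradeq]
      obtain ⟨k, hk⟩ := hEv
      exact ⟨k + 1, by omega⟩

theorem parity (hB : ∀ v, B v v = 0) :
    Even (Module.finrank ℂ V - Module.finrank ℂ (LinearMap.ker B)) := by
  have h := parity_aux B hB (Module.finrank ℂ V) ⊤ (by rw [finrank_top])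
  have hker : rad B ⊤ = LinearMap.ker B := by
    ext x
    rw [mem_rad, LinearMap.mem_ker]
    simp [LinearMap.ext_iff]
  rwa [hker, finrank_top] at h

end Parity



theorem gm_even (a0 a1 a2 a3 a4 a5 a6 a7 a8 a9 : ℂ) :
    Even (10 - Module.finrank ℂ (LinearMap.ker (Gm a0 a1 a2 a3 a4 a5 a6 a7 a8 a9).mulVecLin)) := by
  have halt : ∀ v, bform (Gm a0 a1 a2 a3 a4 a5 a6 a7 a8 a9) v v = 0 := fun v => gm_alt a0 a1 a2 a3 a4 a5 a6 a7 a8 a9 v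
  have hker : LinearMap.ker (bform (Gm a0 a1 a2 a3 a4 a5 a6 a7 a8 a9)) = LinearMap.ker (Gm a0 a1 a2 a3 a4 a5 a6 a7 a8 a9).mulVecLin := by
    ext x
    simp only [LinearMap.mem_ker, Matrix.mulVecLin_apply]
    constructor
    · intro h
      funext j
      have h1 : bform (Gm a0 a1 a2 a3 a4 a5 a6 a7 a8 a9) (Pi.single j 1) x = - bform (Gm a0 a1 a2 a3 a4 a5 a6 a7 a8 a9) x (Pi.single j 1) :=
        bform_pol _ halt _ _
      rw [h, LinearMap.zero_apply, neg_zero, bform_apply, single_dotProduct, one_mul] at h1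
      simpa using h1
    · intro h
      apply LinearMap.ext
      intro y
      rw [bform_pol _ halt x y, bform_apply, h]
      simp
  have hpar := parity (bform (Gm a0 a1 a2 a3 a4 a5 a6 a7 a8 a9)) halt
  rwa [hker, Module.finrank_fin_fun] at hpar



theorem rank_ge4 (A : Matrix (Fin 10) (Fin 10) ℂ) (f : Fin 4 → Fin 10)
    (h : (A.submatrix f f).det ≠ 0) : 4 ≤ A.rank := by
  have hunit : IsUnit (A.submatrix f f) :=
    (Matrix.isUnit_iff_isUnit_det _).2 (isUnit_iff_ne_zero.2 h)
  have h4 : (A.submatrix f f).rank = 4 := by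
    rw [Matrix.rank_of_isUnit _ hunit]
    simp
  have hfac : A.submatrix f f =
      ((1 : Matrix (Fin 10) (Fin 10) ℂ).submatrix f (Equiv.refl (Fin 10))) *
        (A * ((1 : Matrix (Fin 10) (Fin 10) ℂ).submatrix (Equiv.refl (Fin 10)) f)) := by
    rw [Matrix.mul_submatrix_one, Matrix.one_submatrix_mul]
    simp [Matrix.submatrix_submatrix]
  calc 4 = (A.submatrix f f).rank := h4.symm
    _ ≤ (A * ((1 : Matrix (Fin 10) (Fin 10) ℂ).submatrix (Equiv.refl (Fin 10)) f)).rank := by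
        rw [hfac]; exact Matrix.rank_mul_le_right _ _
    _ ≤ A.rank := Matrix.rank_mul_le_left _ _



theorem det_four (M : Matrix (Fin 4) (Fin 4) ℂ) :
    M.det = M 0 0*M 1 1*M 2 2*M 3 3 - M 0 0*M 1 1*M 2 3*M 3 2 - M 0 0*M 1 2*M 2 1*M 3 3 + M 0 0*M 1 2*M 2 3*M 3 1 + M 0 0*M 1 3*M 2 1*M 3 2 - M 0 0*M 1 3*M 2 2*M 3 1 - M 0 1*M 1 0*M 2 2*M 3 3 + M 0 1*M 1 0*M 2 3*M 3 2 + M 0 1*M 1 2*M 2 0*M 3 3 - M 0 1*M 1 2*M 2 3*M 3 0 - M 0 1*M 1 3*M 2 0*M 3 2 + M 0 1*M 1 3*M 2 2*M 3 0 + M 0 2*M 1 0*M 2 1*M 3 3 - M 0 2*M 1 0*M 2 3*M 3 1 - M 0 2*M 1 1*M 2 0*M 3 3 + M 0 2*M 1 1*M 2 3*M 3 0 + M 0 2*M 1 3*M 2 0*M 3 1 - M 0 2*M 1 3*M 2 1*M 3 0 - M 0 3*M 1 0*M 2 1*M 3 2 + M 0 3*M 1 0*M 2 2*M 3 1 + M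 0 3*M 1 1*M 2 0*M 3 2 - M 0 3*M 1 1*M 2 2*M 3 0 - M 0 3*M 1 2*M 2 0*M 3 1 + M 0 3*M 1 2*M 2 1*M 3 0 := by
  rw [show M = !![M 0 0, M 0 1, M 0 2, M 0 3; M 1 0, M 1 1, M 1 2, M 1 3;
      M 2 0, M 2 1, M 2 2, M 2 3; M 3 0, M 3 1, M 3 2, M 3 3] from by
    ext i j; fin_cases i <;> fin_cases j <;> rfl]
  rw [Matrix.det_succ_row_zero]
  have hc : Fin.castSucc (2 : Fin 3) = (2 : Fin 4) := rfl
  simp [Fin.sum_univ_succ, Matrix.det_fin_three, Fin.succAbove]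
  ring


theorem comm_iff_scalar (a0 a1 a2 a3 a4 a5 a6 a7 a8 a9 x0 x1 x2 x3 x4 x5 x6 x7 x8 x9 : ℂ) :
    Phim x0 x1 x2 x3 x4 x5 x6 x7 x8 x9 * Phim a0 a1 a2 a3 a4 a5 a6 a7 a8 a9 = Phim a0 a1 a2 a3 a4 a5 a6 a7 a8 a9 * Phim x0 x1 x2 x3 x4 x5 x6 x7 x8 x9 ↔
      (Gm a0 a1 a2 a3 a4 a5 a6 a7 a8 a9) *ᵥ ![x0, x1, x2, x3, x4, x5, x6, x7, x8, x9] = 0 := by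
  constructor
  · intro h
    have E00 := congrFun (congrFun h 0) 0
    have E10 := congrFun (congrFun h 1) 0
    have E20 := congrFun (congrFun h 2) 0
    have E30 := congrFun (congrFun h 3) 0
    have E01 := congrFun (congrFun h 0) 1
    have E11 := congrFun (congrFun h 1) 1
    have E21 := congrFun (congrFun h 2) 1
    have E02 := congrFun (congrFun h 0) 2
    have E12 := congrFun (congrFun h 1) 2
    have E03 := congrFun (congrFun h 0) 3
    simp only [Phim, Matrix.mul_apply, Fin.sum_univ_succ, Fin.sum_univ_zero, Matrix.of_apply,
      cv4_0, cv4_1, cv4_2, cv4_3, Matrix.cons_val_zero, Matrix.cons_val_one, Matrix.head_cons,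
      Matrix.cons_val_succ] at E00 E10 E20 E30 E01 E11 E21 E02 E12 E03
    have R0 : ((Gm a0 a1 a2 a3 a4 a5 a6 a7 a8 a9) *ᵥ ![x0, x1, x2, x3, x4, x5, x6, x7, x8, x9]) (0 : Fin 10) = 0 := by
      simp only [Gm, Matrix.mulVec, dotProduct, Fin.sum_univ_succ, Fin.sum_univ_zero,
        Matrix.of_apply, Matrix.cons_val_zero, Matrix.cons_val_one, Matrix.head_cons,
        Matrix.cons_val_succ, cv10_0]
      linear_combination (2 : ℂ) * E00
    have R1 : ((Gm a0 a1 a2 a3 a4 a5 a6 a7 a8 a9) *ᵥ ![x0, x1, x2, x3, x4, x5, x6, x7, x8, x9]) (1 : Fin 10) = 0 := by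
      simp only [Gm, Matrix.mulVec, dotProduct, Fin.sum_univ_succ, Fin.sum_univ_zero,
        Matrix.of_apply, Matrix.cons_val_zero, Matrix.cons_val_one, Matrix.head_cons,
        Matrix.cons_val_succ, cv10_1]
      linear_combination (2 : ℂ) * E10
    have R2 : ((Gm a0 a1 a2 a3 a4 a5 a6 a7 a8 a9) *ᵥ ![x0, x1, x2, x3, x4, x5, x6, x7, x8, x9]) (2 : Fin 10) = 0 := by
      simp only [Gm, Matrix.mulVec, dotProduct, Fin.sum_univ_succ, Fin.sum_univ_zero,
        Matrix.of_apply, Matrix.cons_val_zero, Matrix.cons_val_one, Matrix.head_cons,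
        Matrix.cons_val_succ, cv10_2]
      linear_combination (2 : ℂ) * E20
    have R3 : ((Gm a0 a1 a2 a3 a4 a5 a6 a7 a8 a9) *ᵥ ![x0, x1, x2, x3, x4, x5, x6, x7, x8, x9]) (3 : Fin 10) = 0 := by
      simp only [Gm, Matrix.mulVec, dotProduct, Fin.sum_univ_succ, Fin.sum_univ_zero,
        Matrix.of_apply, Matrix.cons_val_zero, Matrix.cons_val_one, Matrix.head_cons,
        Matrix.cons_val_succ, cv10_3]
      linear_combination (1 : ℂ) * E30
    have R4 : ((Gm a0 a1 a2 a3 a4 a5 a6 a7 a8 a9) *ᵥ ![x0, x1, x2, x3, x4, x5, x6, x7, x8, x9]) (4 : Fin 10) = 0 := by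
      simp only [Gm, Matrix.mulVec, dotProduct, Fin.sum_univ_succ, Fin.sum_univ_zero,
        Matrix.of_apply, Matrix.cons_val_zero, Matrix.cons_val_one, Matrix.head_cons,
        Matrix.cons_val_succ, cv10_4]
      linear_combination (2 : ℂ) * E01
    have R5 : ((Gm a0 a1 a2 a3 a4 a5 a6 a7 a8 a9) *ᵥ ![x0, x1, x2, x3, x4, x5, x6, x7, x8, x9]) (5 : Fin 10) = 0 := by
      simp only [Gm, Matrix.mulVec, dotProduct, Fin.sum_univ_succ, Fin.sum_univ_zero,
        Matrix.of_apply, Matrix.cons_val_zero, Matrix.cons_val_one, Matrix.head_cons,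
        Matrix.cons_val_succ, cv10_5]
      linear_combination (2 : ℂ) * E11
    have R6 : ((Gm a0 a1 a2 a3 a4 a5 a6 a7 a8 a9) *ᵥ ![x0, x1, x2, x3, x4, x5, x6, x7, x8, x9]) (6 : Fin 10) = 0 := by
      simp only [Gm, Matrix.mulVec, dotProduct, Fin.sum_univ_succ, Fin.sum_univ_zero,
        Matrix.of_apply, Matrix.cons_val_zero, Matrix.cons_val_one, Matrix.head_cons,
        Matrix.cons_val_succ, cv10_6]
      linear_combination (1 : ℂ) * E21
    have R7 : ((Gm a0 a1 a2 a3 a4 a5 a6 a7 a8 a9) *ᵥ ![x0, x1, x2, x3, x4, x5, x6, x7, x8, x9]) (7 : Fin 10) = 0 := by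
      simp only [Gm, Matrix.mulVec, dotProduct, Fin.sum_univ_succ, Fin.sum_univ_zero,
        Matrix.of_apply, Matrix.cons_val_zero, Matrix.cons_val_one, Matrix.head_cons,
        Matrix.cons_val_succ, cv10_7]
      linear_combination (2 : ℂ) * E02
    have R8 : ((Gm a0 a1 a2 a3 a4 a5 a6 a7 a8 a9) *ᵥ ![x0, x1, x2, x3, x4, x5, x6, x7, x8, x9]) (8 : Fin 10) = 0 := by
      simp only [Gm, Matrix.mulVec, dotProduct, Fin.sum_univ_succ, Fin.sum_univ_zero,
        Matrix.of_apply, Matrix.cons_val_zero, Matrix.cons_val_one, Matrix.head_cons,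
        Matrix.cons_val_succ, cv10_8]
      linear_combination (1 : ℂ) * E12
    have R9 : ((Gm a0 a1 a2 a3 a4 a5 a6 a7 a8 a9) *ᵥ ![x0, x1, x2, x3, x4, x5, x6, x7, x8, x9]) (9 : Fin 10) = 0 := by
      simp only [Gm, Matrix.mulVec, dotProduct, Fin.sum_univ_succ, Fin.sum_univ_zero,
        Matrix.of_apply, Matrix.cons_val_zero, Matrix.cons_val_one, Matrix.head_cons,
        Matrix.cons_val_succ, cv10_9]
      linear_combination (1 : ℂ) * E03
    funext r
    fin_cases r <;> assumption
  · intro h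
    have e0 := congrFun h (0 : Fin 10)
    have e1 := congrFun h (1 : Fin 10)
    have e2 := congrFun h (2 : Fin 10)
    have e3 := congrFun h (3 : Fin 10)
    have e4 := congrFun h (4 : Fin 10)
    have e5 := congrFun h (5 : Fin 10)
    have e6 := congrFun h (6 : Fin 10)
    have e7 := congrFun h (7 : Fin 10)
    have e8 := congrFun h (8 : Fin 10)
    have e9 := congrFun h (9 : Fin 10)
    simp only [Gm, Matrix.mulVec, dotProduct, Fin.sum_univ_succ, Fin.sum_univ_zero,
      Matrix.of_apply, Matrix.cons_val_zero, Matrix.cons_val_one, Matrix.head_cons,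
      Matrix.cons_val_succ, Pi.zero_apply, cv10_0, cv10_1, cv10_2, cv10_3, cv10_4,
      cv10_5, cv10_6, cv10_7, cv10_8, cv10_9] at e0 e1 e2 e3 e4 e5 e6 e7 e8 e9
    have F00 : (Phim x0 x1 x2 x3 x4 x5 x6 x7 x8 x9 * Phim a0 a1 a2 a3 a4 a5 a6 a7 a8 a9) 0 0 = (Phim a0 a1 a2 a3 a4 a5 a6 a7 a8 a9 * Phim x0 x1 x2 x3 x4 x5 x6 x7 x8 x9) 0 0 := by
      simp only [Phim, Matrix.mul_apply, Fin.sum_univ_succ, Fin.sum_univ_zero, Matrix.of_apply,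
        cv4_0, cv4_1, cv4_2, cv4_3, Matrix.cons_val_zero, Matrix.cons_val_one, Matrix.head_cons,
        Matrix.cons_val_succ]
      linear_combination ((1/2 : ℂ) : ℂ) * e0
    have F01 : (Phim x0 x1 x2 x3 x4 x5 x6 x7 x8 x9 * Phim a0 a1 a2 a3 a4 a5 a6 a7 a8 a9) 0 1 = (Phim a0 a1 a2 a3 a4 a5 a6 a7 a8 a9 * Phim x0 x1 x2 x3 x4 x5 x6 x7 x8 x9) 0 1 := by
      simp only [Phim, Matrix.mul_apply, Fin.sum_univ_succ, Fin.sum_univ_zero, Matrix.of_apply,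
        cv4_0, cv4_1, cv4_2, cv4_3, Matrix.cons_val_zero, Matrix.cons_val_one, Matrix.head_cons,
        Matrix.cons_val_succ]
      linear_combination ((1/2 : ℂ) : ℂ) * e4
    have F02 : (Phim x0 x1 x2 x3 x4 x5 x6 x7 x8 x9 * Phim a0 a1 a2 a3 a4 a5 a6 a7 a8 a9) 0 2 = (Phim a0 a1 a2 a3 a4 a5 a6 a7 a8 a9 * Phim x0 x1 x2 x3 x4 x5 x6 x7 x8 x9) 0 2 := by
      simp only [Phim, Matrix.mul_apply, Fin.sum_univ_succ, Fin.sum_univ_zero, Matrix.of_apply,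
        cv4_0, cv4_1, cv4_2, cv4_3, Matrix.cons_val_zero, Matrix.cons_val_one, Matrix.head_cons,
        Matrix.cons_val_succ]
      linear_combination ((1/2 : ℂ) : ℂ) * e7
    have F03 : (Phim x0 x1 x2 x3 x4 x5 x6 x7 x8 x9 * Phim a0 a1 a2 a3 a4 a5 a6 a7 a8 a9) 0 3 = (Phim a0 a1 a2 a3 a4 a5 a6 a7 a8 a9 * Phim x0 x1 x2 x3 x4 x5 x6 x7 x8 x9) 0 3 := by
      simp only [Phim, Matrix.mul_apply, Fin.sum_univ_succ, Fin.sum_univ_zero, Matrix.of_apply,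
        cv4_0, cv4_1, cv4_2, cv4_3, Matrix.cons_val_zero, Matrix.cons_val_one, Matrix.head_cons,
        Matrix.cons_val_succ]
      linear_combination (1 : ℂ) * e9
    have F10 : (Phim x0 x1 x2 x3 x4 x5 x6 x7 x8 x9 * Phim a0 a1 a2 a3 a4 a5 a6 a7 a8 a9) 1 0 = (Phim a0 a1 a2 a3 a4 a5 a6 a7 a8 a9 * Phim x0 x1 x2 x3 x4 x5 x6 x7 x8 x9) 1 0 := by
      simp only [Phim, Matrix.mul_apply, Fin.sum_univ_succ, Fin.sum_univ_zero, Matrix.of_apply,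
        cv4_0, cv4_1, cv4_2, cv4_3, Matrix.cons_val_zero, Matrix.cons_val_one, Matrix.head_cons,
        Matrix.cons_val_succ]
      linear_combination ((1/2 : ℂ) : ℂ) * e1
    have F11 : (Phim x0 x1 x2 x3 x4 x5 x6 x7 x8 x9 * Phim a0 a1 a2 a3 a4 a5 a6 a7 a8 a9) 1 1 = (Phim a0 a1 a2 a3 a4 a5 a6 a7 a8 a9 * Phim x0 x1 x2 x3 x4 x5 x6 x7 x8 x9) 1 1 := by
      simp only [Phim, Matrix.mul_apply, Fin.sum_univ_succ, Fin.sum_univ_zero, Matrix.of_apply,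
        cv4_0, cv4_1, cv4_2, cv4_3, Matrix.cons_val_zero, Matrix.cons_val_one, Matrix.head_cons,
        Matrix.cons_val_succ]
      linear_combination ((1/2 : ℂ) : ℂ) * e5
    have F12 : (Phim x0 x1 x2 x3 x4 x5 x6 x7 x8 x9 * Phim a0 a1 a2 a3 a4 a5 a6 a7 a8 a9) 1 2 = (Phim a0 a1 a2 a3 a4 a5 a6 a7 a8 a9 * Phim x0 x1 x2 x3 x4 x5 x6 x7 x8 x9) 1 2 := by
      simp only [Phim, Matrix.mul_apply, Fin.sum_univ_succ, Fin.sum_univ_zero, Matrix.of_apply,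
        cv4_0, cv4_1, cv4_2, cv4_3, Matrix.cons_val_zero, Matrix.cons_val_one, Matrix.head_cons,
        Matrix.cons_val_succ]
      linear_combination (1 : ℂ) * e8
    have F13 : (Phim x0 x1 x2 x3 x4 x5 x6 x7 x8 x9 * Phim a0 a1 a2 a3 a4 a5 a6 a7 a8 a9) 1 3 = (Phim a0 a1 a2 a3 a4 a5 a6 a7 a8 a9 * Phim x0 x1 x2 x3 x4 x5 x6 x7 x8 x9) 1 3 := by
      simp only [Phim, Matrix.mul_apply, Fin.sum_univ_succ, Fin.sum_univ_zero, Matrix.of_apply,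
        cv4_0, cv4_1, cv4_2, cv4_3, Matrix.cons_val_zero, Matrix.cons_val_one, Matrix.head_cons,
        Matrix.cons_val_succ]
      linear_combination ((1/2 : ℂ) : ℂ) * e7
    have F20 : (Phim x0 x1 x2 x3 x4 x5 x6 x7 x8 x9 * Phim a0 a1 a2 a3 a4 a5 a6 a7 a8 a9) 2 0 = (Phim a0 a1 a2 a3 a4 a5 a6 a7 a8 a9 * Phim x0 x1 x2 x3 x4 x5 x6 x7 x8 x9) 2 0 := by
      simp only [Phim, Matrix.mul_apply, Fin.sum_univ_succ, Fin.sum_univ_zero, Matrix.of_apply,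
        cv4_0, cv4_1, cv4_2, cv4_3, Matrix.cons_val_zero, Matrix.cons_val_one, Matrix.head_cons,
        Matrix.cons_val_succ]
      linear_combination ((1/2 : ℂ) : ℂ) * e2
    have F21 : (Phim x0 x1 x2 x3 x4 x5 x6 x7 x8 x9 * Phim a0 a1 a2 a3 a4 a5 a6 a7 a8 a9) 2 1 = (Phim a0 a1 a2 a3 a4 a5 a6 a7 a8 a9 * Phim x0 x1 x2 x3 x4 x5 x6 x7 x8 x9) 2 1 := by
      simp only [Phim, Matrix.mul_apply, Fin.sum_univ_succ, Fin.sum_univ_zero, Matrix.of_apply,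
        cv4_0, cv4_1, cv4_2, cv4_3, Matrix.cons_val_zero, Matrix.cons_val_one, Matrix.head_cons,
        Matrix.cons_val_succ]
      linear_combination (1 : ℂ) * e6
    have F22 : (Phim x0 x1 x2 x3 x4 x5 x6 x7 x8 x9 * Phim a0 a1 a2 a3 a4 a5 a6 a7 a8 a9) 2 2 = (Phim a0 a1 a2 a3 a4 a5 a6 a7 a8 a9 * Phim x0 x1 x2 x3 x4 x5 x6 x7 x8 x9) 2 2 := by
      simp only [Phim, Matrix.mul_apply, Fin.sum_univ_succ, Fin.sum_univ_zero, Matrix.of_apply,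
        cv4_0, cv4_1, cv4_2, cv4_3, Matrix.cons_val_zero, Matrix.cons_val_one, Matrix.head_cons,
        Matrix.cons_val_succ]
      linear_combination ((-1/2 : ℂ) : ℂ) * e5
    have F23 : (Phim x0 x1 x2 x3 x4 x5 x6 x7 x8 x9 * Phim a0 a1 a2 a3 a4 a5 a6 a7 a8 a9) 2 3 = (Phim a0 a1 a2 a3 a4 a5 a6 a7 a8 a9 * Phim x0 x1 x2 x3 x4 x5 x6 x7 x8 x9) 2 3 := by
      simp only [Phim, Matrix.mul_apply, Fin.sum_univ_succ, Fin.sum_univ_zero, Matrix.of_apply,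
        cv4_0, cv4_1, cv4_2, cv4_3, Matrix.cons_val_zero, Matrix.cons_val_one, Matrix.head_cons,
        Matrix.cons_val_succ]
      linear_combination ((-1/2 : ℂ) : ℂ) * e4
    have F30 : (Phim x0 x1 x2 x3 x4 x5 x6 x7 x8 x9 * Phim a0 a1 a2 a3 a4 a5 a6 a7 a8 a9) 3 0 = (Phim a0 a1 a2 a3 a4 a5 a6 a7 a8 a9 * Phim x0 x1 x2 x3 x4 x5 x6 x7 x8 x9) 3 0 := by
      simp only [Phim, Matrix.mul_apply, Fin.sum_univ_succ, Fin.sum_univ_zero, Matrix.of_apply,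
        cv4_0, cv4_1, cv4_2, cv4_3, Matrix.cons_val_zero, Matrix.cons_val_one, Matrix.head_cons,
        Matrix.cons_val_succ]
      linear_combination (1 : ℂ) * e3
    have F31 : (Phim x0 x1 x2 x3 x4 x5 x6 x7 x8 x9 * Phim a0 a1 a2 a3 a4 a5 a6 a7 a8 a9) 3 1 = (Phim a0 a1 a2 a3 a4 a5 a6 a7 a8 a9 * Phim x0 x1 x2 x3 x4 x5 x6 x7 x8 x9) 3 1 := by
      simp only [Phim, Matrix.mul_apply, Fin.sum_univ_succ, Fin.sum_univ_zero, Matrix.of_apply,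
        cv4_0, cv4_1, cv4_2, cv4_3, Matrix.cons_val_zero, Matrix.cons_val_one, Matrix.head_cons,
        Matrix.cons_val_succ]
      linear_combination ((1/2 : ℂ) : ℂ) * e2
    have F32 : (Phim x0 x1 x2 x3 x4 x5 x6 x7 x8 x9 * Phim a0 a1 a2 a3 a4 a5 a6 a7 a8 a9) 3 2 = (Phim a0 a1 a2 a3 a4 a5 a6 a7 a8 a9 * Phim x0 x1 x2 x3 x4 x5 x6 x7 x8 x9) 3 2 := by
      simp only [Phim, Matrix.mul_apply, Fin.sum_univ_succ, Fin.sum_univ_zero, Matrix.of_apply,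
        cv4_0, cv4_1, cv4_2, cv4_3, Matrix.cons_val_zero, Matrix.cons_val_one, Matrix.head_cons,
        Matrix.cons_val_succ]
      linear_combination ((-1/2 : ℂ) : ℂ) * e1
    have F33 : (Phim x0 x1 x2 x3 x4 x5 x6 x7 x8 x9 * Phim a0 a1 a2 a3 a4 a5 a6 a7 a8 a9) 3 3 = (Phim a0 a1 a2 a3 a4 a5 a6 a7 a8 a9 * Phim x0 x1 x2 x3 x4 x5 x6 x7 x8 x9) 3 3 := by
      simp only [Phim, Matrix.mul_apply, Fin.sum_univ_succ, Fin.sum_univ_zero, Matrix.of_apply,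
        cv4_0, cv4_1, cv4_2, cv4_3, Matrix.cons_val_zero, Matrix.cons_val_one, Matrix.head_cons,
        Matrix.cons_val_succ]
      linear_combination ((-1/2 : ℂ) : ℂ) * e0
    ext p q
    fin_cases p <;> fin_cases q <;> assumption


def Phil : (Fin 10 → ℂ) →ₗ[ℂ] Matrix (Fin 4) (Fin 4) ℂ where
  toFun v := Phim (v 0) (v 1) (v 2) (v 3) (v 4) (v 5) (v 6) (v 7) (v 8) (v 9)
  map_add' x y := by
    ext i j
    fin_cases i <;> fin_cases j <;> simp [Phim, Matrix.vecHead, Matrix.vecTail] <;> ring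
  map_smul' c x := by
    ext i j
    fin_cases i <;> fin_cases j <;> simp [Phim, Matrix.vecHead, Matrix.vecTail] <;> ring

def coordFn (M : Matrix (Fin 4) (Fin 4) ℂ) : Fin 10 → ℂ :=
  ![M 0 0, M 0 1, M 0 2, M 0 3, M 1 0, M 1 1, M 1 2, M 2 0, M 2 1, M 3 0]

def coordL : Matrix (Fin 4) (Fin 4) ℂ →ₗ[ℂ] (Fin 10 → ℂ) where
  toFun := coordFn
  map_add' A B := by
    funext r
    fin_cases r <;> simp [coordFn]
  map_smul' c A := by
    funext r
    fin_cases r <;> simp [coordFn]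

theorem vec_eta10 (v : Fin 10 → ℂ) : ![v 0, v 1, v 2, v 3, v 4, v 5, v 6, v 7, v 8, v 9] = v := by
  funext r
  fin_cases r <;> rfl

theorem phil_mem (v : Fin 10 → ℂ) : Phil v ∈ sp4 :=
  ⟨rfl, rfl, rfl, rfl, rfl, rfl⟩

theorem phil_coordL {M : Matrix (Fin 4) (Fin 4) ℂ} (hM : M ∈ sp4) : Phil (coordL M) = M := by
  obtain ⟨c1, c2, c3, c4, c5, c6⟩ := hM
  have H00 : Phil (coordL M) 0 0 = M 0 0 := rfl
  have H01 : Phil (coordL M) 0 1 = M 0 1 := rfl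
  have H02 : Phil (coordL M) 0 2 = M 0 2 := rfl
  have H03 : Phil (coordL M) 0 3 = M 0 3 := rfl
  have H10 : Phil (coordL M) 1 0 = M 1 0 := rfl
  have H11 : Phil (coordL M) 1 1 = M 1 1 := rfl
  have H12 : Phil (coordL M) 1 2 = M 1 2 := rfl
  have H13 : Phil (coordL M) 1 3 = M 1 3 := c1.symm
  have H20 : Phil (coordL M) 2 0 = M 2 0 := rfl
  have H21 : Phil (coordL M) 2 1 = M 2 1 := rfl
  have H22 : Phil (coordL M) 2 2 = M 2 2 := c2.symm
  have H23 : Phil (coordL M) 2 3 = M 2 3 := c3.symm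
  have H30 : Phil (coordL M) 3 0 = M 3 0 := rfl
  have H31 : Phil (coordL M) 3 1 = M 3 1 := c4.symm
  have H32 : Phil (coordL M) 3 2 = M 3 2 := c5.symm
  have H33 : Phil (coordL M) 3 3 = M 3 3 := c6.symm
  ext i j
  fin_cases i <;> fin_cases j <;> assumption

theorem coordL_phil (v : Fin 10 → ℂ) : coordL (Phil v) = v := by
  funext r
  fin_cases r <;> rfl

theorem mem_commWith {q z : Matrix (Fin 4) (Fin 4) ℂ} : z ∈ commWith q ↔ z * q = q * z :=
  Iff.rfl

theorem dim_eq (a0 a1 a2 a3 a4 a5 a6 a7 a8 a9 : ℂ) :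
    Module.finrank ℂ (cent (Phim a0 a1 a2 a3 a4 a5 a6 a7 a8 a9)) =
      Module.finrank ℂ (LinearMap.ker (Gm a0 a1 a2 a3 a4 a5 a6 a7 a8 a9).mulVecLin) := by
  have hiff : ∀ v : Fin 10 → ℂ,
      (Phil v * Phim a0 a1 a2 a3 a4 a5 a6 a7 a8 a9 = Phim a0 a1 a2 a3 a4 a5 a6 a7 a8 a9 * Phil v ↔ (Gm a0 a1 a2 a3 a4 a5 a6 a7 a8 a9) *ᵥ v = 0) := by
    intro v
    have h := comm_iff_scalar a0 a1 a2 a3 a4 a5 a6 a7 a8 a9 (v 0) (v 1) (v 2) (v 3) (v 4) (v 5) (v 6) (v 7) (v 8) (v 9)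
    rwa [vec_eta10] at h
  refine (LinearEquiv.finrank_eq ?_).symm
  refine
    { toFun := fun x => ⟨Phil x.1, ?_, ?_⟩
      map_add' := ?_
      map_smul' := ?_
      invFun := fun z => ⟨coordL z.1, ?_⟩
      left_inv := ?_
      right_inv := ?_ }
  · exact phil_mem x.1
  · refine mem_commWith.2 ((hiff x.1).2 ?_)
    have hx2 : (Gm a0 a1 a2 a3 a4 a5 a6 a7 a8 a9).mulVecLin x.1 = 0 := LinearMap.mem_ker.mp x.2
    rwa [Matrix.mulVecLin_apply] at hx2
  · intro x y
    apply Subtype.ext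
    exact Phil.map_add x.1 y.1
  · intro c x
    apply Subtype.ext
    exact Phil.map_smul c x.1
  · rw [LinearMap.mem_ker, Matrix.mulVecLin_apply]
    refine (hiff (coordL z.1)).1 ?_
    rw [phil_coordL z.2.1]
    exact mem_commWith.1 z.2.2
  · intro x
    apply Subtype.ext
    exact coordL_phil x.1
  · intro z
    apply Subtype.ext
    exact phil_coordL z.2.1

theorem phim_zero : Phim 0 0 0 0 0 0 0 0 0 0 = 0 := by
  ext i j
  fin_cases i <;> fin_cases j <;> simp [Phim, Matrix.vecHead, Matrix.vecTail]

theorem gm_zero : Gm 0 0 0 0 0 0 0 0 0 0 = 0 := by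
  ext i j
  fin_cases i <;> fin_cases j <;> simp [Gm, Matrix.vecHead, Matrix.vecTail]

end SP4Aux

open SP4Aux


theorem stratum_dimensions (ξ : Matrix (Fin 4) (Fin 4) ℂ) (hξ : ξ ∈ sp4) :
    Module.finrank ℂ (cent ξ) ∈ ({2, 4, 6, 10} : Set ℕ) := by
  have hs := hξ
  obtain ⟨c1, c2, c3, c4, c5, c6⟩ := hξ
  obtain ⟨a0, a1, a2, a3, a4, a5, a6, a7, a8, a9, hrepr⟩ : ∃ a0 a1 a2 a3 a4 a5 a6 a7 a8 a9 : ℂ, ξ = Phim a0 a1 a2 a3 a4 a5 a6 a7 a8 a9 := by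
    refine ⟨ξ 0 0, ξ 0 1, ξ 0 2, ξ 0 3, ξ 1 0, ξ 1 1, ξ 1 2, ξ 2 0, ξ 2 1, ξ 3 0, ?_⟩
    have H00 : ξ 0 0 = Phim (ξ 0 0) (ξ 0 1) (ξ 0 2) (ξ 0 3) (ξ 1 0) (ξ 1 1) (ξ 1 2) (ξ 2 0) (ξ 2 1) (ξ 3 0) 0 0 := rfl
    have H01 : ξ 0 1 = Phim (ξ 0 0) (ξ 0 1) (ξ 0 2) (ξ 0 3) (ξ 1 0) (ξ 1 1) (ξ 1 2) (ξ 2 0) (ξ 2 1) (ξ 3 0) 0 1 := rfl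
    have H02 : ξ 0 2 = Phim (ξ 0 0) (ξ 0 1) (ξ 0 2) (ξ 0 3) (ξ 1 0) (ξ 1 1) (ξ 1 2) (ξ 2 0) (ξ 2 1) (ξ 3 0) 0 2 := rfl
    have H03 : ξ 0 3 = Phim (ξ 0 0) (ξ 0 1) (ξ 0 2) (ξ 0 3) (ξ 1 0) (ξ 1 1) (ξ 1 2) (ξ 2 0) (ξ 2 1) (ξ 3 0) 0 3 := rfl
    have H10 : ξ 1 0 = Phim (ξ 0 0) (ξ 0 1) (ξ 0 2) (ξ 0 3) (ξ 1 0) (ξ 1 1) (ξ 1 2) (ξ 2 0) (ξ 2 1) (ξ 3 0) 1 0 := rfl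
    have H11 : ξ 1 1 = Phim (ξ 0 0) (ξ 0 1) (ξ 0 2) (ξ 0 3) (ξ 1 0) (ξ 1 1) (ξ 1 2) (ξ 2 0) (ξ 2 1) (ξ 3 0) 1 1 := rfl
    have H12 : ξ 1 2 = Phim (ξ 0 0) (ξ 0 1) (ξ 0 2) (ξ 0 3) (ξ 1 0) (ξ 1 1) (ξ 1 2) (ξ 2 0) (ξ 2 1) (ξ 3 0) 1 2 := rfl
    have H13 : ξ 1 3 = Phim (ξ 0 0) (ξ 0 1) (ξ 0 2) (ξ 0 3) (ξ 1 0) (ξ 1 1) (ξ 1 2) (ξ 2 0) (ξ 2 1) (ξ 3 0) 1 3 := c1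
    have H20 : ξ 2 0 = Phim (ξ 0 0) (ξ 0 1) (ξ 0 2) (ξ 0 3) (ξ 1 0) (ξ 1 1) (ξ 1 2) (ξ 2 0) (ξ 2 1) (ξ 3 0) 2 0 := rfl
    have H21 : ξ 2 1 = Phim (ξ 0 0) (ξ 0 1) (ξ 0 2) (ξ 0 3) (ξ 1 0) (ξ 1 1) (ξ 1 2) (ξ 2 0) (ξ 2 1) (ξ 3 0) 2 1 := rfl
    have H22 : ξ 2 2 = Phim (ξ 0 0) (ξ 0 1) (ξ 0 2) (ξ 0 3) (ξ 1 0) (ξ 1 1) (ξ 1 2) (ξ 2 0) (ξ 2 1) (ξ 3 0) 2 2 := c2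
    have H23 : ξ 2 3 = Phim (ξ 0 0) (ξ 0 1) (ξ 0 2) (ξ 0 3) (ξ 1 0) (ξ 1 1) (ξ 1 2) (ξ 2 0) (ξ 2 1) (ξ 3 0) 2 3 := c3
    have H30 : ξ 3 0 = Phim (ξ 0 0) (ξ 0 1) (ξ 0 2) (ξ 0 3) (ξ 1 0) (ξ 1 1) (ξ 1 2) (ξ 2 0) (ξ 2 1) (ξ 3 0) 3 0 := rfl
    have H31 : ξ 3 1 = Phim (ξ 0 0) (ξ 0 1) (ξ 0 2) (ξ 0 3) (ξ 1 0) (ξ 1 1) (ξ 1 2) (ξ 2 0) (ξ 2 1) (ξ 3 0) 3 1 := c4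
    have H32 : ξ 3 2 = Phim (ξ 0 0) (ξ 0 1) (ξ 0 2) (ξ 0 3) (ξ 1 0) (ξ 1 1) (ξ 1 2) (ξ 2 0) (ξ 2 1) (ξ 3 0) 3 2 := c5
    have H33 : ξ 3 3 = Phim (ξ 0 0) (ξ 0 1) (ξ 0 2) (ξ 0 3) (ξ 1 0) (ξ 1 1) (ξ 1 2) (ξ 2 0) (ξ 2 1) (ξ 3 0) 3 3 := c6
    ext i j
    fin_cases i <;> fin_cases j <;> assumption
  have hdim : Module.finrank ℂ (cent ξ) =
      Module.finrank ℂ (LinearMap.ker (Gm a0 a1 a2 a3 a4 a5 a6 a7 a8 a9).mulVecLin) := by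
    rw [hrepr]; exact dim_eq a0 a1 a2 a3 a4 a5 a6 a7 a8 a9
  by_cases h0 : ξ = 0
  · have hz : Phim a0 a1 a2 a3 a4 a5 a6 a7 a8 a9 = 0 := by rw [← hrepr, h0]
    have hz0 : a0 = 0 := congrFun (congrFun hz 0) 0
    have hz1 : a1 = 0 := congrFun (congrFun hz 0) 1
    have hz2 : a2 = 0 := congrFun (congrFun hz 0) 2
    have hz3 : a3 = 0 := congrFun (congrFun hz 0) 3
    have hz4 : a4 = 0 := congrFun (congrFun hz 1) 0
    have hz5 : a5 = 0 := congrFun (congrFun hz 1) 1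
    have hz6 : a6 = 0 := congrFun (congrFun hz 1) 2
    have hz7 : a7 = 0 := congrFun (congrFun hz 2) 0
    have hz8 : a8 = 0 := congrFun (congrFun hz 2) 1
    have hz9 : a9 = 0 := congrFun (congrFun hz 3) 0
    rw [hz0, hz1, hz2, hz3, hz4, hz5, hz6, hz7, hz8, hz9, gm_zero, Matrix.mulVecLin_zero,
      LinearMap.ker_zero, finrank_top, Module.finrank_fin_fun] at hdim
    rw [hdim]
    simp
  · have hrn := LinearMap.finrank_range_add_finrank_ker ((Gm a0 a1 a2 a3 a4 a5 a6 a7 a8 a9).mulVecLin)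
    rw [Module.finrank_fin_fun] at hrn
    have hpar := gm_even a0 a1 a2 a3 a4 a5 a6 a7 a8 a9
    have hrank4 : 4 ≤ (Gm a0 a1 a2 a3 a4 a5 a6 a7 a8 a9).rank := by
      by_contra hlt
      push_neg at hlt
      have hdet : ∀ f : Fin 4 → Fin 10, ((Gm a0 a1 a2 a3 a4 a5 a6 a7 a8 a9).submatrix f f).det = 0 := by
        intro f
        by_contra hd
        exact absurd (rank_ge4 (Gm a0 a1 a2 a3 a4 a5 a6 a7 a8 a9) f hd) (by omega)
      have hdpf0123 := hdet ![0, 1, 2, 3]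
      have hqpf0123 : ((Gm a0 a1 a2 a3 a4 a5 a6 a7 a8 a9).submatrix ![(0 : Fin 10), 1, 2, 3] ![(0 : Fin 10), 1, 2, 3]).det
          = (4*a9*a9)^2 := by
        rw [det_four]
        simp only [Matrix.submatrix_apply, Gm, Matrix.of_apply, cv4_0, cv4_1, cv4_2, cv4_3,
          cv10_0, cv10_1, cv10_2, cv10_3, cv10_4, cv10_5, cv10_6, cv10_7, cv10_8, cv10_9,
          Matrix.cons_val_zero, Matrix.cons_val_one, Matrix.head_cons, Matrix.cons_val_succ]
        ring
      have hpf0123 : (4*a9*a9) = 0 := by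
        have := hqpf0123.symm.trans hdpf0123
        exact pow_eq_zero_iff (two_ne_zero) |>.mp this
      have hdpf0126 := hdet ![0, 1, 2, 6]
      have hqpf0126 : ((Gm a0 a1 a2 a3 a4 a5 a6 a7 a8 a9).submatrix ![(0 : Fin 10), 1, 2, 6] ![(0 : Fin 10), 1, 2, 6]).det
          = (-4*a7*a7)^2 := by
        rw [det_four]
        simp only [Matrix.submatrix_apply, Gm, Matrix.of_apply, cv4_0, cv4_1, cv4_2, cv4_3,
          cv10_0, cv10_1, cv10_2, cv10_3, cv10_4, cv10_5, cv10_6, cv10_7, cv10_8, cv10_9,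
          Matrix.cons_val_zero, Matrix.cons_val_one, Matrix.head_cons, Matrix.cons_val_succ]
        ring
      have hpf0126 : (-4*a7*a7) = 0 := by
        have := hqpf0126.symm.trans hdpf0126
        exact pow_eq_zero_iff (two_ne_zero) |>.mp this
      have hdpf0128 := hdet ![0, 1, 2, 8]
      have hqpf0128 : ((Gm a0 a1 a2 a3 a4 a5 a6 a7 a8 a9).submatrix ![(0 : Fin 10), 1, 2, 8] ![(0 : Fin 10), 1, 2, 8]).det
          = (4*a4*a4)^2 := by
        rw [det_four]
        simp only [Matrix.submatrix_apply, Gm, Matrix.of_apply, cv4_0, cv4_1, cv4_2, cv4_3,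
          cv10_0, cv10_1, cv10_2, cv10_3, cv10_4, cv10_5, cv10_6, cv10_7, cv10_8, cv10_9,
          Matrix.cons_val_zero, Matrix.cons_val_one, Matrix.head_cons, Matrix.cons_val_succ]
        ring
      have hpf0128 : (4*a4*a4) = 0 := by
        have := hqpf0128.symm.trans hdpf0128
        exact pow_eq_zero_iff (two_ne_zero) |>.mp this
      have hdpf0467 := hdet ![0, 4, 6, 7]
      have hqpf0467 : ((Gm a0 a1 a2 a3 a4 a5 a6 a7 a8 a9).submatrix ![(0 : Fin 10), 4, 6, 7] ![(0 : Fin 10), 4, 6, 7]).det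
          = (-4*a1*a1)^2 := by
        rw [det_four]
        simp only [Matrix.submatrix_apply, Gm, Matrix.of_apply, cv4_0, cv4_1, cv4_2, cv4_3,
          cv10_0, cv10_1, cv10_2, cv10_3, cv10_4, cv10_5, cv10_6, cv10_7, cv10_8, cv10_9,
          Matrix.cons_val_zero, Matrix.cons_val_one, Matrix.head_cons, Matrix.cons_val_succ]
        ring
      have hpf0467 : (-4*a1*a1) = 0 := by
        have := hqpf0467.symm.trans hdpf0467
        exact pow_eq_zero_iff (two_ne_zero) |>.mp this
      have hdpf0478 := hdet ![0, 4, 7, 8]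
      have hqpf0478 : ((Gm a0 a1 a2 a3 a4 a5 a6 a7 a8 a9).submatrix ![(0 : Fin 10), 4, 7, 8] ![(0 : Fin 10), 4, 7, 8]).det
          = (-4*a2*a2)^2 := by
        rw [det_four]
        simp only [Matrix.submatrix_apply, Gm, Matrix.of_apply, cv4_0, cv4_1, cv4_2, cv4_3,
          cv10_0, cv10_1, cv10_2, cv10_3, cv10_4, cv10_5, cv10_6, cv10_7, cv10_8, cv10_9,
          Matrix.cons_val_zero, Matrix.cons_val_one, Matrix.head_cons, Matrix.cons_val_succ]
        ring
      have hpf0478 : (-4*a2*a2) = 0 := by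
        have := hqpf0478.symm.trans hdpf0478
        exact pow_eq_zero_iff (two_ne_zero) |>.mp this
      have hdpf0479 := hdet ![0, 4, 7, 9]
      have hqpf0479 : ((Gm a0 a1 a2 a3 a4 a5 a6 a7 a8 a9).submatrix ![(0 : Fin 10), 4, 7, 9] ![(0 : Fin 10), 4, 7, 9]).det
          = (4*a3*a3)^2 := by
        rw [det_four]
        simp only [Matrix.submatrix_apply, Gm, Matrix.of_apply, cv4_0, cv4_1, cv4_2, cv4_3,
          cv10_0, cv10_1, cv10_2, cv10_3, cv10_4, cv10_5, cv10_6, cv10_7, cv10_8, cv10_9,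
          Matrix.cons_val_zero, Matrix.cons_val_one, Matrix.head_cons, Matrix.cons_val_succ]
        ring
      have hpf0479 : (4*a3*a3) = 0 := by
        have := hqpf0479.symm.trans hdpf0479
        exact pow_eq_zero_iff (two_ne_zero) |>.mp this
      have hdpf1578 := hdet ![1, 5, 7, 8]
      have hqpf1578 : ((Gm a0 a1 a2 a3 a4 a5 a6 a7 a8 a9).submatrix ![(1 : Fin 10), 5, 7, 8] ![(1 : Fin 10), 5, 7, 8]).det
          = (-4*a6*a6)^2 := by
        rw [det_four]
        simp only [Matrix.submatrix_apply, Gm, Matrix.of_apply, cv4_0, cv4_1, cv4_2, cv4_3,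
          cv10_0, cv10_1, cv10_2, cv10_3, cv10_4, cv10_5, cv10_6, cv10_7, cv10_8, cv10_9,
          Matrix.cons_val_zero, Matrix.cons_val_one, Matrix.head_cons, Matrix.cons_val_succ]
        ring
      have hpf1578 : (-4*a6*a6) = 0 := by
        have := hqpf1578.symm.trans hdpf1578
        exact pow_eq_zero_iff (two_ne_zero) |>.mp this
      have hdpf2456 := hdet ![2, 4, 5, 6]
      have hqpf2456 : ((Gm a0 a1 a2 a3 a4 a5 a6 a7 a8 a9).submatrix ![(2 : Fin 10), 4, 5, 6] ![(2 : Fin 10), 4, 5, 6]).det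
          = (-4*a8*a8)^2 := by
        rw [det_four]
        simp only [Matrix.submatrix_apply, Gm, Matrix.of_apply, cv4_0, cv4_1, cv4_2, cv4_3,
          cv10_0, cv10_1, cv10_2, cv10_3, cv10_4, cv10_5, cv10_6, cv10_7, cv10_8, cv10_9,
          Matrix.cons_val_zero, Matrix.cons_val_one, Matrix.head_cons, Matrix.cons_val_succ]
        ring
      have hpf2456 : (-4*a8*a8) = 0 := by
        have := hqpf2456.symm.trans hdpf2456
        exact pow_eq_zero_iff (two_ne_zero) |>.mp this
      have hdpf1349 := hdet ![1, 3, 4, 9]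
      have hqpf1349 : ((Gm a0 a1 a2 a3 a4 a5 a6 a7 a8 a9).submatrix ![(1 : Fin 10), 3, 4, 9] ![(1 : Fin 10), 3, 4, 9]).det
          = (4*a2*a7 + 4*a0*a5 - 4*a0*a0)^2 := by
        rw [det_four]
        simp only [Matrix.submatrix_apply, Gm, Matrix.of_apply, cv4_0, cv4_1, cv4_2, cv4_3,
          cv10_0, cv10_1, cv10_2, cv10_3, cv10_4, cv10_5, cv10_6, cv10_7, cv10_8, cv10_9,
          Matrix.cons_val_zero, Matrix.cons_val_one, Matrix.head_cons, Matrix.cons_val_succ]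
        ring
      have hpf1349 : (4*a2*a7 + 4*a0*a5 - 4*a0*a0) = 0 := by
        have := hqpf1349.symm.trans hdpf1349
        exact pow_eq_zero_iff (two_ne_zero) |>.mp this
      have hdpf1468 := hdet ![1, 4, 6, 8]
      have hqpf1468 : ((Gm a0 a1 a2 a3 a4 a5 a6 a7 a8 a9).submatrix ![(1 : Fin 10), 4, 6, 8] ![(1 : Fin 10), 4, 6, 8]).det
          = (-4*a5*a5 + 4*a2*a7 + 4*a0*a5)^2 := by
        rw [det_four]
        simp only [Matrix.submatrix_apply, Gm, Matrix.of_apply, cv4_0, cv4_1, cv4_2, cv4_3,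
          cv10_0, cv10_1, cv10_2, cv10_3, cv10_4, cv10_5, cv10_6, cv10_7, cv10_8, cv10_9,
          Matrix.cons_val_zero, Matrix.cons_val_one, Matrix.head_cons, Matrix.cons_val_succ]
        ring
      have hpf1468 : (-4*a5*a5 + 4*a2*a7 + 4*a0*a5) = 0 := by
        have := hqpf1468.symm.trans hdpf1468
        exact pow_eq_zero_iff (two_ne_zero) |>.mp this
      have hdpf3689 := hdet ![3, 6, 8, 9]
      have hqpf3689 : ((Gm a0 a1 a2 a3 a4 a5 a6 a7 a8 a9).submatrix ![(3 : Fin 10), 6, 8, 9] ![(3 : Fin 10), 6, 8, 9]).det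
          = (4*a0*a5)^2 := by
        rw [det_four]
        simp only [Matrix.submatrix_apply, Gm, Matrix.of_apply, cv4_0, cv4_1, cv4_2, cv4_3,
          cv10_0, cv10_1, cv10_2, cv10_3, cv10_4, cv10_5, cv10_6, cv10_7, cv10_8, cv10_9,
          Matrix.cons_val_zero, Matrix.cons_val_one, Matrix.head_cons, Matrix.cons_val_succ]
        ring
      have hpf3689 : (4*a0*a5) = 0 := by
        have := hqpf3689.symm.trans hdpf3689
        exact pow_eq_zero_iff (two_ne_zero) |>.mp this
      have za9 : a9 = 0 := by
        have hsq : a9 * a9 = 0 := by linear_combination ((1/4 : ℂ) : ℂ) * hpf0123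
        exact mul_self_eq_zero.mp hsq
      have za7 : a7 = 0 := by
        have hsq : a7 * a7 = 0 := by linear_combination ((-1/4 : ℂ) : ℂ) * hpf0126
        exact mul_self_eq_zero.mp hsq
      have za4 : a4 = 0 := by
        have hsq : a4 * a4 = 0 := by linear_combination ((1/4 : ℂ) : ℂ) * hpf0128
        exact mul_self_eq_zero.mp hsq
      have za1 : a1 = 0 := by
        have hsq : a1 * a1 = 0 := by linear_combination ((-1/4 : ℂ) : ℂ) * hpf0467
        exact mul_self_eq_zero.mp hsq
      have za2 : a2 = 0 := by
        have hsq : a2 * a2 = 0 := by linear_combination ((-1/4 : ℂ) : ℂ) * hpf0478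
        exact mul_self_eq_zero.mp hsq
      have za3 : a3 = 0 := by
        have hsq : a3 * a3 = 0 := by linear_combination ((1/4 : ℂ) : ℂ) * hpf0479
        exact mul_self_eq_zero.mp hsq
      have za6 : a6 = 0 := by
        have hsq : a6 * a6 = 0 := by linear_combination ((-1/4 : ℂ) : ℂ) * hpf1578
        exact mul_self_eq_zero.mp hsq
      have za8 : a8 = 0 := by
        have hsq : a8 * a8 = 0 := by linear_combination ((-1/4 : ℂ) : ℂ) * hpf2456
        exact mul_self_eq_zero.mp hsq
      have za0 : a0 = 0 := by
        have hsq : a0 * a0 = 0 := by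
          linear_combination (-1/4 : ℂ) * hpf1349 + (1/4 : ℂ) * hpf3689 + a2 * za7
        exact mul_self_eq_zero.mp hsq
      have za5 : a5 = 0 := by
        have hsq : a5 * a5 = 0 := by
          linear_combination (-1/4 : ℂ) * hpf1468 + (1/4 : ℂ) * hpf3689 + a2 * za7
        exact mul_self_eq_zero.mp hsq
      apply h0
      rw [hrepr, za0, za1, za2, za3, za4, za5, za6, za7, za8, za9]
      exact phim_zero
    have hd1 : 1 ≤ Module.finrank ℂ (cent ξ) := by
      have hmem : ξ ∈ cent ξ := ⟨hs, rfl⟩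
      have hne : (⟨ξ, hmem⟩ : cent ξ) ≠ 0 := by
        intro hc
        exact h0 (by simpa [Subtype.ext_iff] using hc)
      haveI : Nontrivial (cent ξ) := nontrivial_of_ne _ _ hne
      exact Module.finrank_pos
    rw [hdim] at hd1 ⊢
    obtain ⟨k, hk⟩ := hpar
    have hrk : (Gm a0 a1 a2 a3 a4 a5 a6 a7 a8 a9).rank = 
        Module.finrank ℂ (LinearMap.range (Gm a0 a1 a2 a3 a4 a5 a6 a7 a8 a9).mulVecLin) := rfl
    rw [hrk] at hrank4
    have hmem : Module.finrank ℂ (LinearMap.ker (Gm a0 a1 a2 a3 a4 a5 a6 a7 a8 a9).mulVecLin) = 2 ∨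
        Module.finrank ℂ (LinearMap.ker (Gm a0 a1 a2 a3 a4 a5 a6 a7 a8 a9).mulVecLin) = 4 ∨
        Module.finrank ℂ (LinearMap.ker (Gm a0 a1 a2 a3 a4 a5 a6 a7 a8 a9).mulVecLin) = 6 := by omega
    rcases hmem with h | h | h <;> rw [h] <;> simp

end
end

section
/- Let N' ∈ 𝔤 be the matrix whose only nonzero entry is a 1 in position (0,3). The centralizer 𝔷 = {z ∈ 𝔤 : zN' = N'z} equals the set of matrices with rows (0,b,c,d), (0,f,g,c), (0,i,−f,−b), (0,0,0,0) for (b,c,d,f,g,i) ∈ ℂ⁶; in particular 𝔷 is a 6-dimensional ℂ-subspace of 𝔤. -/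
open Matrix

noncomputable section

/-! N' is the matrix unit `single 0 3 1`, and a matrix commutes with a matrix unit `E_ij`
exactly when its `i`-th column and `j`-th row vanish off the diagonal and `M i i = M j j`.
In `sp₄` the two corner entries `M 0 0` and `M 3 3` are also negatives of each other, so
they vanish, and the six remaining free entries parametrize the centralizer linearly. -/

theorem Matrix.commute_single_one_iff {n α : Type*} [Fintype n] [DecidableEq n] [Semiring α]
    {i j : n} (hij : i ≠ j) {M : Matrix n n α} :
    Commute (single i j 1) M ↔
      (∀ k, k ≠ i → M k i = 0) ∧ (∀ k, k ≠ j → M j k = 0) ∧ M i i = M j j := by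
  refine ⟨fun hM => ⟨fun k hk => col_eq_zero_of_commute_single hM hk,
    fun k hk => row_eq_zero_of_commute_single hM hk, diag_eq_of_commute_single hM⟩, ?_⟩
  rintro ⟨hcol, hrow, hdiag⟩
  ext a b
  rcases eq_or_ne a i with rfl | hai <;> rcases eq_or_ne b j with rfl | hbj
  · simpa using hdiag.symm
  · simp [hbj, hrow b hbj]
  · simp [hai, hcol a hai]
  · simp [hai, hbj]

lemma nprime_eq_single :
    !![0,0,0,1; 0,0,0,0; 0,0,0,0; 0,0,0,0] = single (0 : Fin 4) 3 (1 : ℂ) := by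
  ext i j; fin_cases i <;> fin_cases j <;> rfl

def centParam : (Fin 6 → ℂ) →ₗ[ℂ] Matrix (Fin 4) (Fin 4) ℂ where
  toFun v := !![0, v 0, v 1, v 2; 0, v 3, v 4, v 1; 0, v 5, -v 3, -v 0; 0, 0, 0, 0]
  map_add' u v := by ext i j; fin_cases i <;> fin_cases j <;> simp [add_comm]
  map_smul' a v := by ext i j; fin_cases i <;> fin_cases j <;> simp

lemma centParam_injective : Function.Injective centParam := by
  intro u v h
  funext k
  fin_cases k
  exacts [congr_fun₂ h 0 1, congr_fun₂ h 0 2, congr_fun₂ h 0 3, congr_fun₂ h 1 1,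
    congr_fun₂ h 1 2, congr_fun₂ h 2 1]

lemma mem_commWith_iff_commute {q M : Matrix (Fin 4) (Fin 4) ℂ} :
    M ∈ commWith q ↔ Commute q M :=
  eq_comm

lemma coe_cent_single_eq_range :
    (cent (single 0 3 1) : Set (Matrix (Fin 4) (Fin 4) ℂ)) = Set.range centParam := by
  ext M
  simp only [SetLike.mem_coe, cent, Submodule.mem_inf, mem_commWith_iff_commute,
    commute_single_one_iff (show (0 : Fin 4) ≠ 3 by decide)]
  constructor
  · rintro ⟨⟨h13, h22, h23, -, -, h33⟩, hcol, hrow, hdiag⟩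
    have h00 : M 0 0 = 0 := by linear_combination (hdiag + h33) / 2
    refine ⟨![M 0 1, M 0 2, M 0 3, M 1 1, M 1 2, M 2 1], ?_⟩
    ext i j
    fin_cases i <;> fin_cases j <;>
      simp [centParam, h00, h13, h22, h23, h33, hcol 1 (by decide), hcol 2 (by decide),
        hcol 3 (by decide), hrow 1 (by decide), hrow 2 (by decide)]
  · rintro ⟨v, rfl⟩
    refine ⟨by simp [sp4, centParam], fun k hk => ?_, fun k hk => ?_, by simp [centParam]⟩ <;>
      fin_cases k <;> simp_all [centParam]

lemma range_centParam : Set.range centParam =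
    {M | ∃ b c d f g i : ℂ, M = !![0,b,c,d; 0,f,g,c; 0,i,-f,-b; 0,0,0,0]} := by
  ext M
  constructor
  · rintro ⟨v, rfl⟩
    exact ⟨v 0, v 1, v 2, v 3, v 4, v 5, rfl⟩
  · rintro ⟨b, c, d, f, g, i, rfl⟩
    exact ⟨![b, c, d, f, g, i], rfl⟩

theorem centralizer_of_Nprime :
    (cent !![0,0,0,1; 0,0,0,0; 0,0,0,0; 0,0,0,0] : Set (Matrix (Fin 4) (Fin 4) ℂ)) =
      {M | ∃ b c d f g i : ℂ, M = !![0,b,c,d; 0,f,g,c; 0,i,-f,-b; 0,0,0,0]} ∧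
    Module.finrank ℂ (cent !![0,0,0,1; 0,0,0,0; 0,0,0,0; 0,0,0,0]) = 6 := by
  rw [nprime_eq_single]
  have hcent : cent (single 0 3 1) = LinearMap.range centParam :=
    SetLike.coe_injective (coe_cent_single_eq_range.trans (LinearMap.coe_range _).symm)
  refine ⟨coe_cent_single_eq_range.trans range_centParam, ?_⟩
  rw [hcent, LinearMap.finrank_range_of_inj centParam_injective, Module.finrank_fin_fun]

end
end

section
/- For every (b,c,d,f,g,i) ∈ ℂ⁶, the dimension of the centralizer 𝓩_q of q = q(b,c,d,f,g,i) in 𝔤 belongs to {2, 4, 6}. -/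
open Matrix

noncomputable section

open Module

theorem even_sub_ker_of_isAlt : ∀ (n : ℕ) (V : Type) [AddCommGroup V] [Module ℂ V]
    [FiniteDimensional ℂ V] (B : LinearMap.BilinForm ℂ V), Module.finrank ℂ V = n →
    B.IsAlt → Even (Module.finrank ℂ V - Module.finrank ℂ (LinearMap.ker B)) := by
  intro n
  induction n using Nat.strong_induction_on with
  | _ n ih =>
    intro V _ _ _ B hn hB
    by_cases h0 : ∀ x y : V, B x y = 0
    · have hk : LinearMap.ker B = ⊤ := by
        ext x
        simp only [LinearMap.mem_ker, Submodule.mem_top, iff_true]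
        ext y
        simp [h0]
      rw [hk, finrank_top]
      simp
    · push_neg at h0
      obtain ⟨x, y, hxy⟩ := h0
      have hrefl : B.IsRefl := hB.isRefl
      have hyx : B y x = -B x y := (LinearMap.IsAlt.neg hB x y).symm
      set W : Submodule ℂ V := Submodule.span ℂ {x, y} with hW
      have hxW : x ∈ W := Submodule.subset_span (by simp)
      have hyW : y ∈ W := Submodule.subset_span (by simp)
      have hnd : (B.restrict W).Nondegenerate := by
        refine (LinearMap.IsRefl.nondegenerate_iff_separatingLeft (B := B.restrict W) (fun u v h => hrefl u v h)).2 ?_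
        intro m hm
        obtain ⟨a, b, hab⟩ := Submodule.mem_span_pair.1 m.2
        have h1 := hm ⟨x, hxW⟩
        have h2 := hm ⟨y, hyW⟩
        simp only [LinearMap.BilinForm.restrict_apply, LinearMap.domRestrict_apply] at h1 h2
        rw [← hab] at h1 h2
        simp only [map_add, _root_.map_smul, LinearMap.add_apply, LinearMap.smul_apply,
          smul_eq_mul, hB.self_eq_zero x, hB.self_eq_zero y, hyx] at h1 h2
        have ha : a = 0 := by
          have : a * B x y = 0 := by linear_combination h2
          rcases mul_eq_zero.1 this with h | h
          · exact h
          · exact absurd h hxy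
        have hb : b = 0 := by
          have : b * B x y = 0 := by linear_combination -h1
          rcases mul_eq_zero.1 this with h | h
          · exact h
          · exact absurd h hxy
        exact Subtype.ext (by rw [← hab, ha, hb]; simp)
      have hcompl : IsCompl W (B.orthogonal W) :=
        LinearMap.BilinForm.isCompl_orthogonal_of_restrict_nondegenerate hrefl hnd
      -- finrank W = 2
      have hyne : y ≠ 0 := by
        rintro rfl; simp at hxy
      have hli : LinearIndependent ℂ ![x, y] := by
        rw [LinearIndependent.pair_iff]
        intro s t hst
        have h1 : B (s • x + t • y) y = 0 := by rw [hst]; simp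
        simp only [map_add, _root_.map_smul, LinearMap.add_apply, LinearMap.smul_apply,
          smul_eq_mul, hB.self_eq_zero y] at h1
        have hs : s = 0 := by
          have : s * B x y = 0 := by linear_combination h1
          rcases mul_eq_zero.1 this with h | h
          · exact h
          · exact absurd h hxy
        refine ⟨hs, ?_⟩
        rw [hs, zero_smul, zero_add] at hst
        exact (smul_eq_zero.1 hst).resolve_right hyne
      have hW2 : finrank ℂ W = 2 := by
        have hrange : ({x, y} : Set V) = Set.range ![x, y] := by
          simp [Set.range_subset_iff]
          ext v; simp [Fin.exists_fin_two, or_comm]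
        rw [hW, hrange, finrank_span_eq_card hli]
        simp
      have hsum : finrank ℂ W + finrank ℂ (B.orthogonal W) = finrank ℂ V :=
        Submodule.finrank_add_eq_of_isCompl hcompl
      set V' := B.orthogonal W with hV'
      set B' := B.restrict V' with hB'def
      have hB' : B'.IsAlt := fun z => hB.self_eq_zero z.1
      have hn' : finrank ℂ V' = n - 2 := by omega
      have hlt : n - 2 < n := by omega
      have hEV' := ih (n - 2) hlt V' B' hn' hB'
      -- ker B = map of ker B'
      have hker : LinearMap.ker B = (LinearMap.ker B').map V'.subtype := by
        ext z
        constructor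
        · intro hz
          have hz0 : B z = 0 := LinearMap.mem_ker.1 hz
          have hzV' : z ∈ V' := by
            intro w _
            exact hrefl z w (by rw [hz0]; simp)
          refine ⟨⟨z, hzV'⟩, ?_, rfl⟩
          simp only [SetLike.mem_coe, LinearMap.mem_ker]
          ext u
          simp only [hB'def, LinearMap.BilinForm.restrict_apply, hz0]
          simp [hz0]
        · rintro ⟨⟨z, hzV'⟩, hzk, rfl⟩
          simp only [SetLike.mem_coe, LinearMap.mem_ker]
          ext v
          obtain ⟨w, hw, u, hu, rfl⟩ := Submodule.mem_sup.1
            (by rw [hcompl.sup_eq_top]; trivial : v ∈ W ⊔ V')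
          have e1 : B z w = 0 := hrefl w z (hzV' w hw)
          have e2 : B z u = 0 := by
            have := LinearMap.ext_iff.1 (LinearMap.mem_ker.1 hzk) ⟨u, hu⟩
            simpa [hB'def, LinearMap.BilinForm.restrict_apply] using this
          simp [map_add, e1, e2]
      have hkerrank : finrank ℂ (LinearMap.ker B) = finrank ℂ (LinearMap.ker B') := by
        rw [hker, Submodule.finrank_map_subtype_eq]
      have hle : finrank ℂ (LinearMap.ker B') ≤ finrank ℂ V' := Submodule.finrank_le _
      rw [hkerrank]
      have : finrank ℂ V - finrank ℂ (LinearMap.ker B') =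
          2 + (finrank ℂ V' - finrank ℂ (LinearMap.ker B')) := by omega
      rw [this]
      exact (by norm_num : Even 2).add hEV'
lemma mem_sp4_iff {M : Matrix (Fin 4) (Fin 4) ℂ} : M ∈ sp4 ↔ (M 1 3 = M 0 2 ∧ M 2 2 = -M 1 1 ∧
    M 2 3 = -M 0 1 ∧ M 3 1 = M 2 0 ∧ M 3 2 = -M 1 0 ∧ M 3 3 = -M 0 0) := Iff.rfl

lemma qmat_mem (b c d f g i : ℂ) : qmat b c d f g i ∈ sp4 := by
  rw [mem_sp4_iff]
  refine ⟨?_, ?_, ?_, ?_, ?_, ?_⟩ <;> simp [qmat]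

lemma bracket_mem {z w : Matrix (Fin 4) (Fin 4) ℂ} (hz : z ∈ sp4) (hw : w ∈ sp4) :
    z * w - w * z ∈ sp4 := by
  rw [mem_sp4_iff] at hz hw ⊢
  obtain ⟨hz1, hz2, hz3, hz4, hz5, hz6⟩ := hz
  obtain ⟨hw1, hw2, hw3, hw4, hw5, hw6⟩ := hw
  refine ⟨?_, ?_, ?_, ?_, ?_, ?_⟩ <;>
    simp only [Matrix.sub_apply, Matrix.mul_apply, Fin.sum_univ_four] <;>
    simp only [hz1, hz2, hz3, hz4, hz5, hz6, hw1, hw2, hw3, hw4, hw5, hw6] <;> ring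
/-- The matrix built from 10 free coordinates. -/
def ofC (v : Fin 10 → ℂ) : Matrix (Fin 4) (Fin 4) ℂ :=
  !![v 0, v 1, v 2, v 3; v 4, v 5, v 6, v 2; v 7, v 8, -(v 5), -(v 1); v 9, v 7, -(v 4), -(v 0)]

lemma ofC_mem (v : Fin 10 → ℂ) : ofC v ∈ sp4 := by
  rw [mem_sp4_iff]
  refine ⟨?_, ?_, ?_, ?_, ?_, ?_⟩ <;> simp [ofC]

/-- Coordinates of an sp4 matrix. -/
def toC (M : Matrix (Fin 4) (Fin 4) ℂ) : Fin 10 → ℂ :=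
  ![M 0 0, M 0 1, M 0 2, M 0 3, M 1 0, M 1 1, M 1 2, M 2 0, M 2 1, M 3 0]

def sp4Equiv : sp4 ≃ₗ[ℂ] (Fin 10 → ℂ) where
  toFun z := toC z.1
  invFun v := ⟨ofC v, ofC_mem v⟩
  map_add' z w := by
    funext k
    fin_cases k <;> rfl
  map_smul' a z := by
    funext k
    fin_cases k <;> rfl
  left_inv z := by
    obtain ⟨M, hM⟩ := z
    rw [mem_sp4_iff] at hM
    obtain ⟨h1, h2, h3, h4, h5, h6⟩ := hM
    apply Subtype.ext
    show ofC (toC M) = M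
    ext i j
    fin_cases i <;> fin_cases j <;>
      first | rfl | exact h1.symm | exact h2.symm | exact h3.symm | exact h4.symm |
        exact h5.symm | exact h6.symm
  right_inv v := by
    funext k
    fin_cases k <;> rfl

lemma finrank_sp4 : Module.finrank ℂ sp4 = 10 := by
  rw [sp4Equiv.finrank_eq]
  simp
lemma trace_nondeg {m : Matrix (Fin 4) (Fin 4) ℂ} (hm : m ∈ sp4)
    (h : ∀ w : Matrix (Fin 4) (Fin 4) ℂ, w ∈ sp4 → (m * w).trace = 0) : m = 0 := by
  rw [mem_sp4_iff] at hm
  obtain ⟨h1, h2, h3, h4, h5, h6⟩ := hm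
  have eA := h !![1,0,0,0; 0,0,0,0; 0,0,0,0; 0,0,0,-1]
    (by rw [mem_sp4_iff]; refine ⟨?_,?_,?_,?_,?_,?_⟩ <;> simp [Matrix.vecHead, Matrix.vecTail])
  have eB := h !![0,1,0,0; 0,0,0,0; 0,0,0,-1; 0,0,0,0]
    (by rw [mem_sp4_iff]; refine ⟨?_,?_,?_,?_,?_,?_⟩ <;> simp [Matrix.vecHead, Matrix.vecTail])
  have eC := h !![0,0,1,0; 0,0,0,1; 0,0,0,0; 0,0,0,0]
    (by rw [mem_sp4_iff]; refine ⟨?_,?_,?_,?_,?_,?_⟩ <;> simp [Matrix.vecHead, Matrix.vecTail])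
  have eD := h !![0,0,0,1; 0,0,0,0; 0,0,0,0; 0,0,0,0]
    (by rw [mem_sp4_iff]; refine ⟨?_,?_,?_,?_,?_,?_⟩ <;> simp [Matrix.vecHead, Matrix.vecTail])
  have eE := h !![0,0,0,0; 1,0,0,0; 0,0,0,0; 0,0,-1,0]
    (by rw [mem_sp4_iff]; refine ⟨?_,?_,?_,?_,?_,?_⟩ <;> simp [Matrix.vecHead, Matrix.vecTail])
  have eF := h !![0,0,0,0; 0,1,0,0; 0,0,-1,0; 0,0,0,0]
    (by rw [mem_sp4_iff]; refine ⟨?_,?_,?_,?_,?_,?_⟩ <;> simp [Matrix.vecHead, Matrix.vecTail])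
  have eG := h !![0,0,0,0; 0,0,1,0; 0,0,0,0; 0,0,0,0]
    (by rw [mem_sp4_iff]; refine ⟨?_,?_,?_,?_,?_,?_⟩ <;> simp [Matrix.vecHead, Matrix.vecTail])
  have eH := h !![0,0,0,0; 0,0,0,0; 1,0,0,0; 0,1,0,0]
    (by rw [mem_sp4_iff]; refine ⟨?_,?_,?_,?_,?_,?_⟩ <;> simp [Matrix.vecHead, Matrix.vecTail])
  have eI := h !![0,0,0,0; 0,0,0,0; 0,1,0,0; 0,0,0,0]
    (by rw [mem_sp4_iff]; refine ⟨?_,?_,?_,?_,?_,?_⟩ <;> simp [Matrix.vecHead, Matrix.vecTail])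
  have eJ := h !![0,0,0,0; 0,0,0,0; 0,0,0,0; 1,0,0,0]
    (by rw [mem_sp4_iff]; refine ⟨?_,?_,?_,?_,?_,?_⟩ <;> simp [Matrix.vecHead, Matrix.vecTail])
  simp [Matrix.trace, Matrix.diag, Matrix.mul_apply, Fin.sum_univ_four, Matrix.vecHead, Matrix.vecTail] at eA eB eC eD eE eF eG eH eI eJ
  have z00 : m 0 0 = 0 := by linear_combination (eA + h6) / 2
  have z01 : m 0 1 = 0 := by linear_combination (eE + h3) / 2
  have z02 : m 0 2 = 0 := by linear_combination (eH - h1) / 2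
  have z03 : m 0 3 = 0 := eJ
  have z10 : m 1 0 = 0 := by linear_combination (eB + h5) / 2
  have z11 : m 1 1 = 0 := by linear_combination (eF + h2) / 2
  have z12 : m 1 2 = 0 := eI
  have z13 : m 1 3 = 0 := by rw [h1, z02]
  have z20 : m 2 0 = 0 := by linear_combination (eC - h4) / 2
  have z21 : m 2 1 = 0 := eG
  have z22 : m 2 2 = 0 := by rw [h2, z11, neg_zero]
  have z23 : m 2 3 = 0 := by rw [h3, z01, neg_zero]
  have z30 : m 3 0 = 0 := eD
  have z31 : m 3 1 = 0 := by rw [h4, z20]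
  have z32 : m 3 2 = 0 := by rw [h5, z10, neg_zero]
  have z33 : m 3 3 = 0 := by rw [h6, z00, neg_zero]
  ext i j
  fin_cases i <;> fin_cases j <;> simp only [Matrix.zero_apply] <;> assumption
section params
variable (b c d f g i : ℂ)

def Tmap : sp4 →ₗ[ℂ] sp4 where
  toFun z := ⟨z.1 * qmat b c d f g i - qmat b c d f g i * z.1,
    bracket_mem z.2 (qmat_mem b c d f g i)⟩
  map_add' z w := by
    apply Subtype.ext
    show (z.1 + w.1) * _ - _ * (z.1 + w.1) = _
    simp only [add_mul, mul_add, Submodule.coe_add]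
    abel
  map_smul' a z := by
    apply Subtype.ext
    show (a • z.1) * _ - _ * (a • z.1) = _
    simp [Matrix.smul_mul, Matrix.mul_smul, smul_sub]

def evq : Matrix (Fin 4) (Fin 4) ℂ →ₗ[ℂ] (Fin 4 → ℂ) where
  toFun m := fun k => m k 0
  map_add' m n := by funext k; simp
  map_smul' a m := by funext k; simp

def Lmap : sp4 →ₗ[ℂ] (Fin 4 → ℂ) := evq ∘ₗ (sp4.subtype ∘ₗ Tmap b c d f g i)

lemma Lmap_surj : Function.Surjective (Lmap b c d f g i) := by
  intro t
  refine ⟨⟨!![-(t 3)/2, -(t 2), t 1, t 0; 0, 0, 0, t 1; 0, 0, 0, t 2; 0, 0, 0, t 3/2],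
    by rw [mem_sp4_iff]; refine ⟨?_,?_,?_,?_,?_,?_⟩ <;>
      simp [Matrix.vecHead, Matrix.vecTail] <;> ring⟩, ?_⟩
  funext k
  simp only [Lmap, LinearMap.coe_comp, Function.comp_apply, Submodule.coe_subtype, evq, Tmap,
    LinearMap.coe_mk, AddHom.coe_mk]
  fin_cases k <;>
    simp [qmat, Matrix.sub_apply, Matrix.mul_apply, Fin.sum_univ_four,
      Matrix.vecHead, Matrix.vecTail] <;> ring

def Cform : LinearMap.BilinForm ℂ sp4 :=
  LinearMap.mk₂ ℂ
    (fun z w : sp4 => ((z.1 * qmat b c d f g i - qmat b c d f g i * z.1) * w.1).trace)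
    (by
      intro x y w
      show ((((x : sp4) + y).1 * _ - _ * ((x : sp4) + y).1) * _).trace = _
      simp only [Submodule.coe_add, add_mul, mul_add, sub_mul]
      rw [show ∀ X Y Z W : Matrix (Fin 4) (Fin 4) ℂ, X + Y - (Z + W) = (X - Z) + (Y - W) by
        intros; abel]
      rw [Matrix.trace_add])
    (by
      intro a x w
      show (((a • (x : sp4)).1 * _ - _ * (a • (x : sp4)).1) * _).trace = _
      simp [Matrix.smul_mul, Matrix.mul_smul, ← smul_sub, Matrix.trace_smul])
    (by
      intro x w₁ w₂
      show (_ * ((w₁ : sp4) + w₂).1).trace = _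
      simp [mul_add, Matrix.trace_add])
    (by
      intro a x w
      show (_ * (a • (w : sp4)).1).trace = _
      simp [Matrix.mul_smul, Matrix.trace_smul])

lemma Cform_isAlt : (Cform b c d f g i).IsAlt := by
  intro z
  show ((z.1 * qmat b c d f g i - qmat b c d f g i * z.1) * z.1).trace = 0
  rw [sub_mul, Matrix.trace_sub, Matrix.mul_assoc, Matrix.trace_mul_comm]
  exact sub_self _

lemma ker_Cform : LinearMap.ker (Cform b c d f g i) = LinearMap.ker (Tmap b c d f g i) := by
  ext z
  simp only [LinearMap.mem_ker]
  constructor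
  · intro hz
    apply Subtype.ext
    show z.1 * qmat b c d f g i - qmat b c d f g i * z.1 = 0
    apply trace_nondeg (bracket_mem z.2 (qmat_mem b c d f g i))
    intro w hw
    have := LinearMap.ext_iff.1 hz ⟨w, hw⟩
    simpa [Cform] using this
  · intro hz
    ext w
    show ((z.1 * qmat b c d f g i - qmat b c d f g i * z.1) * w.1).trace = 0
    have : z.1 * qmat b c d f g i - qmat b c d f g i * z.1 = 0 := congrArg Subtype.val hz
    rw [this]
    simp

def centEquiv : cent (qmat b c d f g i) ≃ₗ[ℂ] LinearMap.ker (Tmap b c d f g i) where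
  toFun z := ⟨⟨z.1, z.2.1⟩, by
    simp only [LinearMap.mem_ker]
    apply Subtype.ext
    show z.1 * qmat b c d f g i - qmat b c d f g i * z.1 = 0
    rw [z.2.2]
    simp⟩
  invFun w := ⟨w.1.1, w.1.2, by
    have : w.1.1 * qmat b c d f g i - qmat b c d f g i * w.1.1 = 0 :=
      congrArg Subtype.val (LinearMap.mem_ker.1 w.2)
    show w.1.1 * qmat b c d f g i = qmat b c d f g i * w.1.1
    linear_combination (norm := (abel)) this⟩
  map_add' z w := rfl
  map_smul' a z := rfl
  left_inv z := rfl
  right_inv w := rfl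

end params
theorem slice_dims (b c d f g i : ℂ) :
    Module.finrank ℂ (cent (qmat b c d f g i)) ∈ ({2, 4, 6} : Set ℕ) := by
  have hfin : Module.finrank ℂ sp4 = 10 := finrank_sp4
  have heven : Even (Module.finrank ℂ sp4 -
      Module.finrank ℂ (LinearMap.ker (Tmap b c d f g i))) := by
    rw [← ker_Cform]
    exact even_sub_ker_of_isAlt 10 sp4 (Cform b c d f g i) hfin (Cform_isAlt b c d f g i)
  set k := Module.finrank ℂ (LinearMap.ker (Tmap b c d f g i)) with hk
  -- upper bound
  have hker_le : LinearMap.ker (Tmap b c d f g i) ≤ LinearMap.ker (Lmap b c d f g i) := by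
    intro z hz
    rw [LinearMap.mem_ker] at hz ⊢
    simp [Lmap, hz]
  have hrange : LinearMap.range (Lmap b c d f g i) = ⊤ :=
    LinearMap.range_eq_top.2 (Lmap_surj b c d f g i)
  have hrn := LinearMap.finrank_range_add_finrank_ker (Lmap b c d f g i)
  rw [hrange, hfin] at hrn
  have h4 : Module.finrank ℂ (⊤ : Submodule ℂ (Fin 4 → ℂ)) = 4 := by simp
  have hkL : Module.finrank ℂ (LinearMap.ker (Lmap b c d f g i)) = 6 := by omega
  have hk6 : k ≤ 6 := by
    rw [hk, ← hkL]
    exact Submodule.finrank_mono hker_le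
  -- lower bound
  have hqker : (⟨qmat b c d f g i, qmat_mem b c d f g i⟩ : sp4) ∈
      LinearMap.ker (Tmap b c d f g i) := by
    rw [LinearMap.mem_ker]
    apply Subtype.ext
    show qmat b c d f g i * qmat b c d f g i - qmat b c d f g i * qmat b c d f g i = 0
    exact sub_self _
  have hqne : (⟨⟨qmat b c d f g i, qmat_mem b c d f g i⟩, hqker⟩ :
      LinearMap.ker (Tmap b c d f g i)) ≠ 0 := by
    intro h
    have := congrArg (fun z => ((z : LinearMap.ker (Tmap b c d f g i)) : sp4).1 3 0) h
    simp [qmat] at this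
  have hk1 : 1 ≤ k := by
    rw [hk]
    have : Nontrivial (LinearMap.ker (Tmap b c d f g i)) := ⟨_, _, hqne⟩
    exact Module.finrank_pos (R := ℂ) (M := LinearMap.ker (Tmap b c d f g i))
  -- evenness of k
  have hkeven : Even k := by
    rw [hfin] at heven
    rw [Nat.even_sub (by omega)] at heven
    exact heven.1 ⟨5, rfl⟩
  -- conclude
  have heq : Module.finrank ℂ (cent (qmat b c d f g i)) = k :=
    (centEquiv b c d f g i).finrank_eq
  rw [heq]
  obtain ⟨m, hm⟩ := hkeven
  simp only [Set.mem_insert_iff, Set.mem_singleton_iff]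
  omega
end
end

section
/- For (b,c,d,f,g,i) ∈ ℂ⁶ and q = q(b,c,d,f,g,i), one has dim 𝓩_q = 6 if and only if (b,c,d,f,g,i) = (0,0,0,0,0,0). -/
open Matrix

noncomputable section

/-!
The commutation equations in the first column of `zq = qz` force `z 0 0 = 0` and express the
rest of the top row of `z ∈ 𝓩_q` through its six entries `(E, F, G, H, I, J)`; the symplectic
symmetry then determines all of `z`. So `dim 𝓩_q ≤ 6`, with equality exactly when every vector
of `ℂ⁶` occurs as such a coordinate vector. The remaining commutation equations are linear
relations among `E, …, J` with coefficients `b, c, f, g, i` and `f² + g i - d`: they hold for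
every vector only when all parameters vanish, and for `q(0)` every vector does occur.
-/

-- the coordinates `(E, F, G, H, I, J)` of `𝔤`
def lowerCoords : Matrix (Fin 4) (Fin 4) ℂ →ₗ[ℂ] Fin 6 → ℂ where
  toFun z := ![z 1 0, z 1 1, z 1 2, z 2 0, z 2 1, z 3 0]
  map_add' x y := by ext j; fin_cases j <;> rfl
  map_smul' a x := by ext j; fin_cases j <;> rfl

section slice

variable {b c d f g i : ℂ} {z : Matrix (Fin 4) (Fin 4) ℂ}

theorem top_row_of_mem_cent (hz : z ∈ cent (qmat b c d f g i)) :
    z 0 0 = 0 ∧ z 0 1 = z 2 0 * f + z 3 0 * b - z 1 0 * i ∧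
      z 0 2 = z 1 0 * f + z 2 0 * g + z 3 0 * c ∧ z 0 3 = z 1 0 * b + z 2 0 * c + z 3 0 * d := by
  obtain ⟨⟨s13, -, s23, -, -, s33⟩, hc⟩ := hz
  have e := fun r s => congrFun (congrFun hc r) s
  have e00 := e 0 0
  have e10 := e 1 0
  have e20 := e 2 0
  have e30 := e 3 0
  simp only [qmat, mul_apply, Fin.sum_univ_four, of_apply, cons_val', cons_val, cons_val_fin_one]
    at e00 e10 e20 e30
  refine ⟨?_, ?_, ?_, ?_⟩
  · linear_combination (s33 - e30) / 2
  · linear_combination s23 - e20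
  · linear_combination e10 - s13
  · linear_combination e00

theorem injective_lowerCoords_domRestrict_cent :
    Function.Injective (lowerCoords.domRestrict (cent (qmat b c d f g i))) := by
  rw [← LinearMap.ker_eq_bot, LinearMap.ker_eq_bot']
  rintro ⟨z, hz⟩ h
  have h10 : z 1 0 = 0 := congrFun h 0
  have h11 : z 1 1 = 0 := congrFun h 1
  have h12 : z 1 2 = 0 := congrFun h 2
  have h20 : z 2 0 = 0 := congrFun h 3
  have h21 : z 2 1 = 0 := congrFun h 4
  have h30 : z 3 0 = 0 := congrFun h 5
  obtain ⟨h00, h01, h02, h03⟩ := top_row_of_mem_cent hz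
  obtain ⟨⟨s13, s22, s23, s31, s32, s33⟩, -⟩ := hz
  ext r s
  fin_cases r <;> fin_cases s <;>
    simp [h00, h01, h02, h03, h10, h11, h12, h20, h21, h30, s13, s22, s23, s31, s32, s33]

theorem finrank_cent_eq_six_iff :
    Module.finrank ℂ (cent (qmat b c d f g i)) = 6 ↔
      (cent (qmat b c d f g i)).map lowerCoords = ⊤ := by
  rw [← LinearMap.finrank_range_of_inj injective_lowerCoords_domRestrict_cent,
    LinearMap.range_domRestrict]
  constructor
  · intro h
    exact Submodule.eq_top_of_finrank_eq (h.trans (Module.finrank_fin_fun ℂ).symm)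
  · intro h
    rw [h, finrank_top, Module.finrank_fin_fun]

theorem relations_of_mem_map_cent {v : Fin 6 → ℂ}
    (hv : v ∈ (cent (qmat b c d f g i)).map lowerCoords) :
    v 0 * b + v 2 * i = v 3 * c + v 4 * g ∧ v 0 * c + v 1 * g = v 2 * f ∧
      v 3 * b + v 4 * f = v 1 * i ∧
      v 3 * (f ^ 2 + g * i - d) + v 5 * (b * f + c * i) = v 1 * b + v 4 * c := by
  obtain ⟨z, hz, rfl⟩ := hv
  obtain ⟨h00, h01, h02, -⟩ := top_row_of_mem_cent hz
  obtain ⟨⟨s13, s22, s23, s31, s32, -⟩, hc⟩ := hz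
  have e := fun r s => congrFun (congrFun hc r) s
  have e01 := e 0 1
  have e11 := e 1 1
  have e12 := e 1 2
  have e21 := e 2 1
  simp only [qmat, mul_apply, Fin.sum_univ_four, of_apply, cons_val', cons_val, cons_val_fin_one]
    at e01 e11 e12 e21
  simp only [lowerCoords, LinearMap.coe_mk, AddHom.coe_mk, cons_val]
  refine ⟨?_, ?_, ?_, ?_⟩
  · linear_combination e11 + c * s31
  · linear_combination (e12 + g * s22 + c * s32) / 2
  · linear_combination (e21 - i * s22 - b * s31) / 2
  · linear_combination e01 - b * h00 - f * h01 - i * h02 + d * s31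

theorem eq_zero_of_map_cent_eq_top (h : (cent (qmat b c d f g i)).map lowerCoords = ⊤) :
    b = 0 ∧ c = 0 ∧ d = 0 ∧ f = 0 ∧ g = 0 ∧ i = 0 := by
  have hall (v : Fin 6 → ℂ) : v ∈ (cent (qmat b c d f g i)).map lowerCoords :=
    h ▸ Submodule.mem_top
  have hG := relations_of_mem_map_cent (hall (Pi.single 2 1))
  have hH := relations_of_mem_map_cent (hall (Pi.single 3 1))
  have hI := relations_of_mem_map_cent (hall (Pi.single 4 1))
  simp only [ne_eq, Fin.reduceEq, not_false_eq_true, Pi.single_eq_of_ne, Pi.single_eq_same,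
    zero_mul, one_mul, zero_add, add_zero, and_self, and_true, true_and] at hG hH hI
  obtain ⟨rfl, -⟩ := hG
  obtain ⟨rfl, rfl, hd⟩ := hH
  obtain ⟨rfl, rfl, -⟩ := hI
  exact ⟨rfl, rfl, by linear_combination -hd, rfl, rfl, rfl⟩

end slice

theorem map_cent_qmat_zero : (cent (qmat 0 0 0 0 0 0)).map lowerCoords = ⊤ := by
  refine eq_top_iff.mpr fun v _ =>
    ⟨!![0, 0, 0, 0; v 0, v 1, v 2, 0; v 3, v 4, -v 1, 0; v 5, v 3, -v 0, 0], ⟨?_, ?_⟩, ?_⟩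
  · simp [sp4]
  · ext r s
    fin_cases r <;> fin_cases s <;> simp [qmat, mul_apply, Fin.sum_univ_four]
  · ext j
    fin_cases j <;> rfl

theorem slice_dim_six (b c d f g i : ℂ) :
    Module.finrank ℂ (cent (qmat b c d f g i)) = 6 ↔
      (b = 0 ∧ c = 0 ∧ d = 0 ∧ f = 0 ∧ g = 0 ∧ i = 0) := by
  rw [finrank_cent_eq_six_iff]
  refine ⟨eq_zero_of_map_cent_eq_top, ?_⟩
  rintro ⟨rfl, rfl, rfl, rfl, rfl, rfl⟩
  exact map_cent_qmat_zero

end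
end

section
/- For (b,c,d,f,g,i) ∈ ℂ⁶ and q = q(b,c,d,f,g,i): if bg − cf ≠ 0 or ci + bf ≠ 0, then dim 𝓩_q ≤ 3. -/
open Matrix

noncomputable section

/-! An element `z ∈ 𝓩_q` is determined by the three entries `z₁₀, z₂₀, z₃₀` of its first
column. If they vanish, the entries of `zq = qz` together with the relations defining `𝔤` force
the first row of `z` to vanish and leave a homogeneous linear system in `z₁₁, z₁₂, z₂₁` which
`bg − cf` or `ci + bf` makes nondegenerate. Hence `z ↦ (z₁₀, z₂₀, z₃₀)` embeds `𝓩_q` into `ℂ³`. -/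

def lowerFirstColumn : Matrix (Fin 4) (Fin 4) ℂ →ₗ[ℂ] Fin 3 → ℂ :=
  LinearMap.pi fun k => entryLinearMap ℂ ℂ k.succ 0

lemma lowerFirstColumn_eq_zero_iff {z : Matrix (Fin 4) (Fin 4) ℂ} :
    lowerFirstColumn z = 0 ↔ z 1 0 = 0 ∧ z 2 0 = 0 ∧ z 3 0 = 0 := by
  simp [funext_iff, Fin.forall_fin_succ, lowerFirstColumn]

lemma eq_zero_of_middle_block_relations {R : Type*} [CommRing R] [NoZeroDivisors R]
    {b c f g i x y w : R} (h : b * g - c * f ≠ 0 ∨ c * i + b * f ≠ 0)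
    (h₁ : b * x + c * w = 0) (h₂ : c * x - b * y = 0) (h₃ : i * y - g * w = 0)
    (h₄ : g * x - f * y = 0) (h₅ : i * x - f * w = 0) :
    x = 0 ∧ y = 0 ∧ w = 0 := by
  rcases h with h | h
  · have hx : x = 0 :=
      eq_zero_of_ne_zero_of_mul_left_eq_zero h (by linear_combination b * h₄ - f * h₂)
    have hy : y = 0 :=
      eq_zero_of_ne_zero_of_mul_left_eq_zero h (by linear_combination c * h₄ - g * h₂)
    refine ⟨hx, hy, eq_zero_of_ne_zero_of_mul_left_eq_zero h ?_⟩
    linear_combination -f * h₁ - b * h₃ + f * b * hx + b * i * hy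
  · have hx : x = 0 :=
      eq_zero_of_ne_zero_of_mul_left_eq_zero h (by linear_combination f * h₁ + c * h₅)
    have hw : w = 0 :=
      eq_zero_of_ne_zero_of_mul_left_eq_zero h (by linear_combination i * h₁ - b * h₅)
    refine ⟨hx, eq_zero_of_ne_zero_of_mul_left_eq_zero h ?_, hw⟩
    linear_combination -f * h₂ + c * h₃ + c * f * hx + c * g * hw

section Centralizer

variable {b c d f g i : ℂ} {z : Matrix (Fin 4) (Fin 4) ℂ}

lemma mul_qmat_apply_eq_of_mem_cent (hz : z ∈ cent (qmat b c d f g i)) (r s : Fin 4) :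
    (z * qmat b c d f g i) r s = (qmat b c d f g i * z) r s :=
  congrArg (· r s) hz.2

lemma first_row_eq_zero_of_mem_cent (hz : z ∈ cent (qmat b c d f g i))
    (h10 : z 1 0 = 0) (h20 : z 2 0 = 0) (h30 : z 3 0 = 0) :
    z 0 0 = 0 ∧ z 0 1 = 0 ∧ z 0 2 = 0 ∧ z 0 3 = 0 := by
  obtain ⟨h13, -, h23, -, -, h33⟩ := hz.1
  have e00 := mul_qmat_apply_eq_of_mem_cent hz 0 0
  have e10 := mul_qmat_apply_eq_of_mem_cent hz 1 0
  have e20 := mul_qmat_apply_eq_of_mem_cent hz 2 0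
  have e30 := mul_qmat_apply_eq_of_mem_cent hz 3 0
  simp [qmat, mul_apply, Fin.sum_univ_four, h10, h20, h30, h13, h23, h33] at e00 e10 e20 e30
  exact ⟨by linear_combination -e30 / 2, e20, e10, e00⟩

lemma middle_block_relations_of_mem_cent (hz : z ∈ cent (qmat b c d f g i))
    (h10 : z 1 0 = 0) (h20 : z 2 0 = 0) (h30 : z 3 0 = 0) :
    b * z 1 1 + c * z 2 1 = 0 ∧ c * z 1 1 - b * z 1 2 = 0 ∧ i * z 1 2 - g * z 2 1 = 0 ∧
      g * z 1 1 - f * z 1 2 = 0 ∧ i * z 1 1 - f * z 2 1 = 0 := by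
  obtain ⟨h00, h01, h02, h03⟩ := first_row_eq_zero_of_mem_cent hz h10 h20 h30
  obtain ⟨h13, h22, h23, h31, h32, h33⟩ := hz.1
  have e02 := mul_qmat_apply_eq_of_mem_cent hz 0 2
  have e11 := mul_qmat_apply_eq_of_mem_cent hz 1 1
  have e12 := mul_qmat_apply_eq_of_mem_cent hz 1 2
  have e21 := mul_qmat_apply_eq_of_mem_cent hz 2 1
  have e23 := mul_qmat_apply_eq_of_mem_cent hz 2 3
  simp [qmat, mul_apply, Fin.sum_univ_four, h00, h01, h02, h10, h20, h13, h22, h23, h31,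
    h32, h33] at e02 e11 e12 e21 e23
  refine ⟨?_, ?_, ?_, ?_, ?_⟩
  · linear_combination e23
  · linear_combination e02
  · linear_combination e11
  · linear_combination e12 / 2
  · linear_combination -e21 / 2

lemma eq_zero_of_mem_cent (h : b * g - c * f ≠ 0 ∨ c * i + b * f ≠ 0)
    (hz : z ∈ cent (qmat b c d f g i)) (h10 : z 1 0 = 0) (h20 : z 2 0 = 0) (h30 : z 3 0 = 0) :
    z = 0 := by
  obtain ⟨h00, h01, h02, h03⟩ := first_row_eq_zero_of_mem_cent hz h10 h20 h30
  obtain ⟨r₁, r₂, r₃, r₄, r₅⟩ := middle_block_relations_of_mem_cent hz h10 h20 h30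
  obtain ⟨h11, h12, h21⟩ := eq_zero_of_middle_block_relations h r₁ r₂ r₃ r₄ r₅
  obtain ⟨h13, h22, h23, h31, h32, h33⟩ := hz.1
  ext r s
  fin_cases r <;> fin_cases s <;> simp_all

end Centralizer

theorem slice_dim_le_three (b c d f g i : ℂ)
    (h : b * g - c * f ≠ 0 ∨ c * i + b * f ≠ 0) :
    Module.finrank ℂ (cent (qmat b c d f g i)) ≤ 3 := by
  have hinj : Function.Injective (lowerFirstColumn.domRestrict (cent (qmat b c d f g i))) := by
    refine (injective_iff_map_eq_zero _).2 fun z hz => Subtype.ext ?_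
    obtain ⟨h10, h20, h30⟩ := lowerFirstColumn_eq_zero_iff.1 hz
    exact eq_zero_of_mem_cent h z.2 h10 h20 h30
  calc Module.finrank ℂ (cent (qmat b c d f g i))
      ≤ Module.finrank ℂ (Fin 3 → ℂ) := LinearMap.finrank_le_finrank_of_injective hinj
    _ = 3 := Module.finrank_fin_fun ℂ

end
end

section
/- For (b,c,d,f,g,i) ∈ ℂ⁶ and q = q(b,c,d,f,g,i): if bg − cf = 0, ci + bf = 0, and f·(f² + ig − d) + bc ≠ 0, then dim 𝓩_q = 2. -/
open Matrix

noncomputable section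

set_option maxHeartbeats 3200000 in
theorem slice_dim_two (b c d f g i : ℂ)
    (h1 : b * g - c * f = 0) (h2 : c * i + b * f = 0)
    (h3 : f * (f ^ 2 + i * g - d) + b * c ≠ 0) :
    Module.finrank ℂ (cent (qmat b c d f g i)) = 2 := by
  classical
  set q : Matrix (Fin 4) (Fin 4) ℂ := qmat b c d f g i with hq
  set z2 : Matrix (Fin 4) (Fin 4) ℂ :=
    !![0,0,0,0;
       0, f*(f^2+i*g-d)+b*c, g*(f^2+i*g-d)+c^2, 0;
       0, i*(f^2+i*g-d)-b^2, -(f*(f^2+i*g-d)+b*c), 0;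
       0,0,0,0] with hz2
  have hqsp : q ∈ sp4 := by
    refine ⟨?_, ?_, ?_, ?_, ?_, ?_⟩ <;> simp [hq, qmat, Matrix.vecHead, Matrix.vecTail]
  have hz2sp : z2 ∈ sp4 := by
    refine ⟨?_, ?_, ?_, ?_, ?_, ?_⟩ <;> simp [hz2, Matrix.vecHead, Matrix.vecTail]
  have hz2c : z2 * q = q * z2 := by
    ext r s
    fin_cases r <;> fin_cases s <;>
      simp [hq, hz2, qmat, Matrix.mul_apply, Fin.sum_univ_four,
        Matrix.vecHead, Matrix.vecTail] <;>
      first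
        | linear_combination (d-f^2-g*i)*h2
        | linear_combination (d-f^2-g*i)*h1
        | linear_combination b*h1+c*h2
        | linear_combination 2*c*h1
        | linear_combination (-2*b)*h2
        | linear_combination (-b)*h1-c*h2
        | linear_combination (g*i+f^2-d)*h2
  have hspan : cent q = Submodule.span ℂ (Set.range ![q, z2]) := by
    apply le_antisymm
    · intro z hz
      obtain ⟨hsp, hcm⟩ := hz
      obtain ⟨s1, s2, s3, s4, s5, s6⟩ := hsp
      have hcm' : z * q = q * z := hcm
      have e30 : (z * q) 3 0 = (q * z) 3 0 := by rw [hcm']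
      have e31 : (z * q) 3 1 = (q * z) 3 1 := by rw [hcm']
      have e32 : (z * q) 3 2 = (q * z) 3 2 := by rw [hcm']
      have e33 : (z * q) 3 3 = (q * z) 3 3 := by rw [hcm']
      have e01 : (z * q) 0 1 = (q * z) 0 1 := by rw [hcm']
      have e02 : (z * q) 0 2 = (q * z) 0 2 := by rw [hcm']
      have e12 : (z * q) 1 2 = (q * z) 1 2 := by rw [hcm']
      have e21 : (z * q) 2 1 = (q * z) 2 1 := by rw [hcm']
      simp only [hq, qmat, Matrix.mul_apply, Fin.sum_univ_four] at e30 e31 e32 e33 e01 e02 e12 e21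
      simp at e30 e31 e32 e33 e01 e02 e12 e21
      -- A = 0
      have hA : z 0 0 = 0 := by linear_combination (s6 - e30) / 2
      -- B, C, D in terms of J, H, E
      have hB : z 0 1 = b * z 3 0 + f * z 2 0 - i * z 1 0 := by
        linear_combination -e31 + f * s4 + i * s5
      have hC : z 0 2 = c * z 3 0 + g * z 2 0 + f * z 1 0 := by
        linear_combination -e32 + g * s4 - f * s5
      have hD : z 0 3 = d * z 3 0 + c * z 2 0 + b * z 1 0 := by
        linear_combination -e33 + c * s4 - b * s5
      -- the structural equations
      have hq4 : c * z 1 0 + g * z 1 1 - f * z 1 2 = 0 := by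
        linear_combination (e12 + g * s2 + c * s5) / 2
      have hq5 : b * z 2 0 + f * z 2 1 - i * z 1 1 = 0 := by
        linear_combination (e21 - i * s2 - b * s4) / 2
      have hPE : (f^2 + i*g - d) * z 1 0 = c * z 1 1 - b * z 1 2 := by
        linear_combination -e02 + c * hA + g * hB - f * hC - c * s2 - d * s5 + (z 3 0) * h1
      have hPH : (f^2 + i*g - d) * z 2 0 = b * z 1 1 + c * z 2 1 := by
        linear_combination e01 - b * hA - f * hB - i * hC + d * s4 - (z 3 0) * h2
      -- E = 0 and H = 0
      have hE : z 1 0 = 0 := by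
        have hQE : (f * (f ^ 2 + i * g - d) + b * c) * z 1 0 = 0 := by
          linear_combination f * hPE + b * hq4 - (z 1 1) * h1
        exact (mul_eq_zero.mp hQE).resolve_left h3
      have hH : z 2 0 = 0 := by
        have hQH : (f * (f ^ 2 + i * g - d) + b * c) * z 2 0 = 0 := by
          linear_combination f * hPH + c * hq5 + (z 1 1) * h2
        exact (mul_eq_zero.mp hQH).resolve_left h3
      -- representation
      have hrep : z = (z 3 0) • q +
          ((z 1 1 - f * z 3 0) / (f * (f ^ 2 + i * g - d) + b * c)) • z2 := by
        ext r s
        fin_cases r <;> fin_cases s <;>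
          simp [hq, hz2, qmat, Matrix.smul_apply, Matrix.vecHead, Matrix.vecTail] <;>
          (try field_simp) <;>
          first
            | linear_combination hA
            | linear_combination hB + f * hH - i * hE
            | linear_combination hC + g * hH + f * hE
            | linear_combination hD + c * hH + b * hE
            | linear_combination hE
            | linear_combination hH
            | linear_combination s4 + hH
            | linear_combination s5 - hE
            | linear_combination s6 - hA
            | linear_combination s1 + hC + g * hH + f * hE
            | linear_combination s3 - hB - f * hH + i * hE
            | linear_combination (f*(f^2+i*g-d)+b*c) * s2
            | linear_combination -(f^2+i*g-d) * hq4 + c * hPE - c * (z 3 0) * h1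
            | linear_combination (f^2+i*g-d) * hq5 - b * hPH - b * (z 3 0) * h2
            | (have hP : f * (f ^ 2 + g * i - d) + c * b ≠ 0 := by
                 intro h; apply h3; linear_combination h
               field_simp
               linear_combination -(f^2+i*g-d) * hq4 + c * hPE - c * (z 3 0) * h1)
            | ring
      rw [hrep]
      refine Submodule.add_mem _ (Submodule.smul_mem _ _ ?_) (Submodule.smul_mem _ _ ?_)
      · exact Submodule.subset_span ⟨0, rfl⟩
      · exact Submodule.subset_span ⟨1, rfl⟩
    · rw [Submodule.span_le]
      rintro x ⟨k, rfl⟩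
      fin_cases k
      · exact ⟨hqsp, rfl⟩
      · exact ⟨hz2sp, hz2c⟩
  have hli : LinearIndependent ℂ ![q, z2] := by
    rw [LinearIndependent.pair_iff]
    intro s t hst
    have h30 : (s • q + t • z2) 3 0 = 0 := by rw [hst]; rfl
    have h11 : (s • q + t • z2) 1 1 = 0 := by rw [hst]; rfl
    simp [hq, hz2, qmat, Matrix.add_apply, Matrix.smul_apply,
      Matrix.vecHead, Matrix.vecTail] at h30 h11
    refine ⟨h30, ?_⟩
    have ht : t * (f * (f ^ 2 + i * g - d) + b * c) = 0 := by
      linear_combination h11 - f * h30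
    exact (mul_eq_zero.mp ht).resolve_right h3
  rw [hspan, finrank_span_eq_card hli]
  simp

end
end

section
/- For (b,c,d,f,g,i) ∈ ℂ⁶ and q = q(b,c,d,f,g,i): if b = 0, c = 0, f ≠ 0 and f² + ig − d = 0, then dim 𝓩_q = 4. -/
open Matrix

noncomputable section

/-! On the locus `b = c = 0`, `d = f² + ig`, an element `z ∈ 𝔤` commuting with `q` is determined
by its entries `E = z₁₀`, `F = z₁₁`, `H = z₂₀`, `J = z₃₀`: the commutation equations in the last
row and at positions `(1,2)`, `(2,1)` solve for the remaining free entries of `z` (the latter two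
by dividing by `f`). Conversely every value of `(E, F, H, J)` occurs, so `𝓩_q` is spanned by four
explicit matrices whose `(E, F, H, J)`-coordinates are the standard basis of `ℂ⁴`. -/

section

variable {f g i : ℂ}

abbrev sliceMat (f g i : ℂ) : Matrix (Fin 4) (Fin 4) ℂ := qmat 0 0 (f ^ 2 + i * g) f g i

def centCoords : Matrix (Fin 4) (Fin 4) ℂ →ₗ[ℂ] Fin 4 → ℂ :=
  LinearMap.pi ![entryLinearMap ℂ ℂ 1 0, entryLinearMap ℂ ℂ 1 1,
    entryLinearMap ℂ ℂ 2 0, entryLinearMap ℂ ℂ 3 0]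

def centBasis (f g i : ℂ) : Fin 4 → Matrix (Fin 4) (Fin 4) ℂ :=
  ![!![0, -i, f, 0; 1, 0, 0, f; 0, 0, 0, i; 0, 0, -1, 0],
    !![0, 0, 0, 0; 0, 1, g / f, 0; 0, i / f, -1, 0; 0, 0, 0, 0],
    !![0, f, g, 0; 0, 0, 0, g; 1, 0, 0, -f; 0, 1, 0, 0],
    !![0, 0, 0, f ^ 2 + i * g; 0, 0, 0, 0; 0, 0, 0, 0; 1, 0, 0, 0]]

lemma centCoords_comp_centBasis : centCoords ∘ centBasis f g i = Pi.basisFun ℂ (Fin 4) := by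
  funext j
  ext k
  fin_cases j <;> fin_cases k <;> simp [centCoords, centBasis]

lemma linearIndependent_centBasis : LinearIndependent ℂ (centBasis f g i) :=
  .of_comp centCoords (centCoords_comp_centBasis ▸ (Pi.basisFun ℂ (Fin 4)).linearIndependent)

lemma centBasis_mem (hf : f ≠ 0) (k : Fin 4) : centBasis f g i k ∈ cent (sliceMat f g i) := by
  refine Submodule.mem_inf.2 ⟨?_, ?_⟩
  · fin_cases k <;> refine ⟨?_, ?_, ?_, ?_, ?_, ?_⟩ <;> simp [centBasis]
  · show _ * _ = _ * _
    ext a b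
    fin_cases k <;> fin_cases a <;> fin_cases b <;>
      simp [centBasis, qmat, mul_apply, Fin.sum_univ_four] <;> field_simp <;> ring

lemma entries_of_mem_cent (hf : f ≠ 0) {z : Matrix (Fin 4) (Fin 4) ℂ}
    (hz : z ∈ cent (sliceMat f g i)) :
    z 0 0 = 0 ∧ z 0 1 = f * z 2 0 - i * z 1 0 ∧ z 0 2 = g * z 2 0 + f * z 1 0 ∧
      z 0 3 = (f ^ 2 + i * g) * z 3 0 ∧ z 1 2 = g * z 1 1 / f ∧ z 2 1 = i * z 1 1 / f := by
  obtain ⟨⟨-, h22, -, h31, h32, h33⟩, hcomm : z * sliceMat f g i = sliceMat f g i * z⟩ := hz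
  have e30 := congrFun₂ hcomm 3 0
  have e31 := congrFun₂ hcomm 3 1
  have e32 := congrFun₂ hcomm 3 2
  have e33 := congrFun₂ hcomm 3 3
  have e12 := congrFun₂ hcomm 1 2
  have e21 := congrFun₂ hcomm 2 1
  simp only [qmat, mul_apply, Fin.sum_univ_four, of_apply, cons_val', cons_val_zero,
    cons_val_one, cons_val, cons_val_fin_one, Fin.isValue, mul_zero, zero_mul, mul_one, one_mul,
    add_zero, zero_add, neg_zero, mul_neg, neg_mul] at e30 e31 e32 e33 e12 e21
  refine ⟨?_, ?_, ?_, ?_, ?_, ?_⟩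
  · linear_combination (h33 - e30) / 2
  · linear_combination -e31 + f * h31 + i * h32
  · linear_combination -e32 + g * h31 - f * h32
  · linear_combination -e33
  · field_simp; linear_combination -e12 / 2 - g * h22 / 2
  · field_simp; linear_combination e21 / 2 - i * h22 / 2

lemma eq_sum_centBasis_of_mem_cent (hf : f ≠ 0) {z : Matrix (Fin 4) (Fin 4) ℂ}
    (hz : z ∈ cent (sliceMat f g i)) :
    z = ∑ k, centCoords z k • centBasis f g i k := by
  obtain ⟨h00, h01, h02, h03, h12, h21⟩ := entries_of_mem_cent hf hz
  obtain ⟨⟨h13, h22, h23, h31, h32, h33⟩, -⟩ := hz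
  ext a b
  fin_cases a <;> fin_cases b <;>
    simp [Fin.sum_univ_four, centCoords, centBasis, h00, h01, h02, h03, h12, h21,
      h13, h22, h23, h31, h32, h33] <;> ring

lemma cent_sliceMat_eq_span (hf : f ≠ 0) :
    cent (sliceMat f g i) = Submodule.span ℂ (Set.range (centBasis f g i)) := by
  refine le_antisymm (fun z hz => ?_) (Submodule.span_le.2 ?_)
  · rw [eq_sum_centBasis_of_mem_cent hf hz]
    exact Submodule.sum_mem _ fun k _ => Submodule.smul_mem _ _ (Submodule.subset_span ⟨k, rfl⟩)
  · rintro _ ⟨k, rfl⟩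
    exact centBasis_mem hf k

end

theorem slice_dim_f_ne (b c d f g i : ℂ)
    (hb : b = 0) (hc : c = 0) (hf : f ≠ 0) (hx : f ^ 2 + i * g - d = 0) :
    Module.finrank ℂ (cent (qmat b c d f g i)) = 4 := by
  obtain rfl : d = f ^ 2 + i * g := by linear_combination -hx
  subst hb hc
  rw [cent_sliceMat_eq_span hf, finrank_span_eq_card linearIndependent_centBasis,
    Fintype.card_fin]

end
end

section
/- The map π : ℂ³ → ℂ⁶ given by π(D,G,I) = (DI, GD, D², −IG, −G², I²) is surjective onto X̃': for every (b,c,d,f,g,i) ∈ ℂ⁶ satisfying fd + bc = 0, gd + c² = 0, di − b² = 0 and gi + f² = 0, there exist D, G, I ∈ ℂ with b = DI, c = GD, d = D², f = −IG, g = −G², i = I². -/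
/-!
Off `d = 0`, choose `D` with `D² = d` and put `I = b / D`, `G = c / D`: the relations
`fd + bc = 0`, `gd + c² = 0` and `di = b²` then force `f`, `g`, `i` to be `π(D, G, I)`.
On `d = 0` the relations give `b = c = 0`, and the same argument with `G = √(-g)` in the role
of `D` applies when `g ≠ 0`; when also `g = 0` we get `f = 0`, and `(0, 0, √i)` is a preimage.
-/

variable {K : Type*} [Field K]

def IsPiPreimage (D G I b c d f g i : K) : Prop :=
  b = D * I ∧ c = G * D ∧ d = D ^ 2 ∧ f = -(I * G) ∧ g = -G ^ 2 ∧ i = I ^ 2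

theorem isPiPreimage_of_ne_zero {D b c f g i : K} (hD : D ≠ 0)
    (h1 : f * D ^ 2 + b * c = 0) (h2 : g * D ^ 2 + c ^ 2 = 0) (h3 : D ^ 2 * i - b ^ 2 = 0) :
    IsPiPreimage D (c / D) (b / D) b c (D ^ 2) f g i := by
  refine ⟨by field_simp, by field_simp, rfl, ?_, ?_, ?_⟩
  · field_simp
    linear_combination h1
  · field_simp
    linear_combination h2
  · field_simp
    linear_combination h3

theorem isPiPreimage_zero_of_ne_zero {G f i : K} (hG : G ≠ 0) (h4 : -G ^ 2 * i + f ^ 2 = 0) :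
    IsPiPreimage 0 G (-f / G) 0 0 0 f (-G ^ 2) i := by
  refine ⟨by simp, by simp, by ring, by field_simp, rfl, ?_⟩
  field_simp
  linear_combination -h4

theorem exists_isPiPreimage [IsAlgClosed K] {b c d f g i : K}
    (h1 : f * d + b * c = 0) (h2 : g * d + c ^ 2 = 0) (h3 : d * i - b ^ 2 = 0)
    (h4 : g * i + f ^ 2 = 0) :
    ∃ D G I, IsPiPreimage D G I b c d f g i := by
  by_cases hd : d = 0
  · subst hd
    obtain rfl : b = 0 := pow_eq_zero_iff two_ne_zero |>.mp (by linear_combination -h3)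
    obtain rfl : c = 0 := pow_eq_zero_iff two_ne_zero |>.mp (by linear_combination h2)
    by_cases hg : g = 0
    · subst hg
      obtain rfl : f = 0 := pow_eq_zero_iff two_ne_zero |>.mp (by linear_combination h4)
      obtain ⟨I, rfl⟩ := IsAlgClosed.exists_pow_nat_eq i two_pos
      exact ⟨0, 0, I, by simp [IsPiPreimage]⟩
    · obtain ⟨G, hG⟩ := IsAlgClosed.exists_pow_nat_eq (-g) two_pos
      obtain rfl : g = -G ^ 2 := by linear_combination hG
      exact ⟨0, G, -f / G, isPiPreimage_zero_of_ne_zero (by rintro rfl; simp at hg) h4⟩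
  · obtain ⟨D, rfl⟩ := IsAlgClosed.exists_pow_nat_eq d two_pos
    exact ⟨D, c / D, b / D,
      isPiPreimage_of_ne_zero (by rintro rfl; simp at hd) h1 h2 h3⟩

theorem pi_surjective (b c d f g i : ℂ)
    (h1 : f * d + b * c = 0) (h2 : g * d + c ^ 2 = 0) (h3 : d * i - b ^ 2 = 0)
    (h4 : g * i + f ^ 2 = 0) :
    ∃ D G I : ℂ, b = D * I ∧ c = G * D ∧ d = D ^ 2 ∧ f = -(I * G) ∧ g = -G ^ 2 ∧ i = I ^ 2 :=
  exists_isPiPreimage h1 h2 h3 h4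
end

section
/- Let n ≥ 1 and let w be a permutation of {1,…,2n} commuting with τ. Then for every odd positive integer i, the number of orbits of (the cyclic group generated by) w on {1,…,2n} having exactly i elements is even. (In the cycle-type notation of the paper: ν_i is even for all odd i.) -/
open scoped Classical

private lemma even_card_of_invol {α : Type*} [Finite α]
    (f : α → α) (hf : Function.Involutive f) (hfix : ∀ x, f x ≠ x) :
    Even (Nat.card α) := by
  have := Fintype.ofFinite α
  set F : Function.End α := f with hF
  have hEnd : F ^ (2:ℕ) ^ 1 = 1 := by
    funext x
    simp only [pow_one, pow_two, Function.End.mul_def, Function.End.one_def, hF]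
    exact hf x
  have : Fact (Nat.Prime 2) := ⟨Nat.prime_two⟩
  have h := Equiv.Perm.card_fixedPoints_modEq (p := 2) (n := 1) hEnd
  have hempty : Fintype.card (Function.fixedPoints F) = 0 :=
    Fintype.card_eq_zero_iff.mpr ⟨fun ⟨x, hx⟩ => hfix x hx⟩
  rw [hempty] at h
  rw [Nat.card_eq_fintype_card]
  exact even_iff_two_dvd.mpr (Nat.modEq_zero_iff_dvd.mp h)

theorem odd_cycle_count_even (n : ℕ) (hn : 1 ≤ n) (w : Equiv.Perm (Fin (2 * n)))
    (hw : w * Fin.revPerm = Fin.revPerm * w) (i : ℕ) (hi : Odd i) (hpos : 0 < i) :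
    Even (Nat.card {o : MulAction.orbitRel.Quotient (Subgroup.zpowers w) (Fin (2 * n)) //
      Nat.card o.orbit = i}) := by
  set G := Subgroup.zpowers w with hG
  set r : Equiv.Perm (Fin (2 * n)) := Fin.revPerm with hr
  have hc : Commute w r := hw
  have hcom : ∀ (g : G) (x : Fin (2 * n)),
      (g : Equiv.Perm (Fin (2 * n))) • (r x) = r ((g : Equiv.Perm (Fin (2 * n))) • x) := by
    rintro ⟨g, z, rfl⟩ x
    have h := (hc.zpow_left z).eq
    have := congrArg (fun p : Equiv.Perm (Fin (2 * n)) => p x) h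
    simpa [Equiv.Perm.smul_def, Equiv.Perm.mul_apply] using this
  have horb : ∀ x, MulAction.orbit G (r x) = r '' MulAction.orbit G x := by
    intro x; ext y
    constructor
    · rintro ⟨g, rfl⟩; exact ⟨g • x, MulAction.mem_orbit _ g, (hcom g x).symm⟩
    · rintro ⟨a, ⟨g, rfl⟩, rfl⟩; exact ⟨g, hcom g x⟩
  have hcard : ∀ x, Nat.card (MulAction.orbit G (r x)) = Nat.card (MulAction.orbit G x) := by
    intro x; rw [horb, Nat.card_image_of_injective r.injective]
  have hresp : ∀ x y, MulAction.orbitRel G (Fin (2 * n)) x y →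
      MulAction.orbitRel G (Fin (2 * n)) (r x) (r y) := by
    intro x y h
    rw [MulAction.orbitRel_apply] at h ⊢
    rw [horb]; exact ⟨x, h, rfl⟩
  set σq : MulAction.orbitRel.Quotient G (Fin (2 * n)) →
      MulAction.orbitRel.Quotient G (Fin (2 * n)) := Quotient.map' r hresp with hσq
  have hσorb : ∀ o, Nat.card (σq o).orbit = Nat.card o.orbit := by
    intro o
    induction o using Quotient.inductionOn' with
    | h x =>
      show Nat.card (MulAction.orbitRel.Quotient.orbit (Quotient.mk'' (r x))) = _
      rw [MulAction.orbitRel.Quotient.orbit_mk, MulAction.orbitRel.Quotient.orbit_mk]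
      exact hcard x
  set σ : {o : MulAction.orbitRel.Quotient G (Fin (2 * n)) // Nat.card o.orbit = i} →
      {o : MulAction.orbitRel.Quotient G (Fin (2 * n)) // Nat.card o.orbit = i} :=
    fun p => ⟨σq p.1, by rw [hσorb]; exact p.2⟩ with hσ
  have hinv : Function.Involutive σ := by
    rintro ⟨o, ho⟩
    apply Subtype.ext
    show σq (σq o) = o
    induction o using Quotient.inductionOn' with
    | h x =>
      show Quotient.mk'' (r (r x)) = Quotient.mk'' x
      congr 1
      simp [hr]
  have hfix : ∀ p, σ p ≠ p := by
    rintro ⟨o, ho⟩ hp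
    obtain ⟨x, rfl⟩ : ∃ x, Quotient.mk'' x = o := ⟨Quotient.out (s := MulAction.orbitRel G (Fin (2 * n))) o, Quotient.out_eq (s := MulAction.orbitRel G (Fin (2 * n))) o⟩
    have heq : (Quotient.mk'' (r x) : MulAction.orbitRel.Quotient G (Fin (2 * n)))
        = Quotient.mk'' x := congrArg Subtype.val hp
    have hrel : MulAction.orbitRel G (Fin (2 * n)) (r x) x := Quotient.exact' heq
    rw [MulAction.orbitRel_apply] at hrel
    obtain ⟨⟨g, z, rfl⟩, hgx⟩ := hrel
    have hgx' : w ^ z • x = r x := hgx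
    have hper : Function.minimalPeriod (w • ·) x = i := by
      rw [MulAction.minimalPeriod_eq_card, ← Nat.card_eq_fintype_card]
      exact ho
    have h2 : w ^ (2 * z) • x = x := by
      have hsplit : w ^ (2 * z) = w ^ z * w ^ z := by rw [show (2:ℤ) * z = z + z by ring, zpow_add]
      rw [hsplit, mul_smul, hgx']
      have : w ^ z • r x = r (w ^ z • x) := hcom ⟨w ^ z, z, rfl⟩ x
      rw [this, hgx']
      simp [hr, Equiv.Perm.smul_def]
    rw [MulAction.zpow_smul_eq_iff_minimalPeriod_dvd, hper] at h2
    have hcop : IsCoprime (i : ℤ) 2 := by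
      rw [Int.isCoprime_iff_gcd_eq_one]
      simpa [Int.gcd] using hi.coprime_two_right
    have hdvd : (i : ℤ) ∣ z :=
      hcop.dvd_of_dvd_mul_right (by rwa [mul_comm] at h2)
    have hfixx : w ^ z • x = x := by
      rw [MulAction.zpow_smul_eq_iff_minimalPeriod_dvd, hper]; exact hdvd
    rw [hfixx] at hgx'
    have : (r x).val = x.val := congrArg Fin.val hgx'.symm
    rw [hr] at this
    simp only [Fin.revPerm_apply, Fin.val_rev] at this
    omega
  exact even_card_of_invol σ hinv hfix
end
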